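/- arXiv:math/0210460 — 3 statements merged into one kernel-verified Lean document; each statement's English description precedes it below -/
import Mathlib

section
/- Let τ : C → H ⊗ C be a twisting of the right H-module coalgebra C, i.e. τ satisfies the normality conditions (1 ⊗ ε_C)τ(c) = ε(c)1_H and (ε_H ⊗ 1)τ(c) = c, the compatibility c_{-1}h₁ ⊗ c_0·h₂ = h₁(c·h₂)_{-1} ⊗ (c·h₂)_0, and the coassociativity-type condition c_{-1} ⊗ c_{0,1}·c_{0,2,-1} ⊗ c_{0,2,0} = c_{1,-1} c_{2,-1,1} ⊗ c_{1,0}·c_{2,-1,2} ⊗ c_{2,0}. Then C^τ, defined to be C as a right H-module with comultiplication Δ_τ(c) = c₁·c_{2,-1} ⊗ c_{2,0} and the same counit, is a right H-module coalgebra (in particular Δ_τ is coassociative and counital). -/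
open TensorProduct LinearMap Coalgebra

noncomputable section
set_option linter.unusedSectionVars false

variable (k : Type) [Field k]
variable (H : Type) [Ring H] [HopfAlgebra k H]
variable (C : Type) [AddCommGroup C] [Module k C] [Coalgebra k C]

namespace TwistPaper

/-- The convolution-type product on `Hom(C, H ⊗ C)`:
`(τ * ν)(c) = (m_H ⊗ id_C)((id_H ⊗ ν)(τ c))`. -/
def convT (τ ν : C →ₗ[k] H ⊗[k] C) : C →ₗ[k] H ⊗[k] C :=
  TensorProduct.map (LinearMap.mul' k H) LinearMap.id
    ∘ₗ (TensorProduct.assoc k H H C).symm.toLinearMap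
    ∘ₗ TensorProduct.map LinearMap.id ν ∘ₗ τ

/-- The unit `σ(c) = 1 ⊗ c`. -/
def sigmaT : C →ₗ[k] H ⊗[k] C := TensorProduct.mk k H C 1

/-- `C` is a right `H`-module coalgebra via the action `act : C ⊗ H → C`. -/
def IsModuleCoalg (act : C ⊗[k] H →ₗ[k] C) : Prop :=
  (∀ c : C, act (c ⊗ₜ (1 : H)) = c) ∧
  (∀ (c : C) (g h : H), act (act (c ⊗ₜ g) ⊗ₜ h) = act (c ⊗ₜ (g * h))) ∧
  (Coalgebra.comul ∘ₗ act
    = TensorProduct.map act act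
      ∘ₗ (TensorProduct.tensorTensorTensorComm k C C H H).toLinearMap
      ∘ₗ TensorProduct.map Coalgebra.comul Coalgebra.comul) ∧
  ((Coalgebra.counit : C →ₗ[k] k) ∘ₗ act
    = (TensorProduct.lid k k).toLinearMap
      ∘ₗ TensorProduct.map Coalgebra.counit Coalgebra.counit)

variable (act : C ⊗[k] H →ₗ[k] C)

/-- Left-hand side of (6): `c ⊗ h ↦ c₋₁h₁ ⊗ c₀·h₂`. -/
def eq6L (τ : C →ₗ[k] H ⊗[k] C) : C ⊗[k] H →ₗ[k] H ⊗[k] C :=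
  TensorProduct.map (LinearMap.mul' k H) act
    ∘ₗ (TensorProduct.tensorTensorTensorComm k H C H H).toLinearMap
    ∘ₗ TensorProduct.map τ Coalgebra.comul

/-- Right-hand side of (6): `c ⊗ h ↦ h₁(c·h₂)₋₁ ⊗ (c·h₂)₀`. -/
def eq6R (τ : C →ₗ[k] H ⊗[k] C) : C ⊗[k] H →ₗ[k] H ⊗[k] C :=
  TensorProduct.map (LinearMap.mul' k H) LinearMap.id
    ∘ₗ (TensorProduct.assoc k H H C).symm.toLinearMap
    ∘ₗ TensorProduct.map LinearMap.id (τ ∘ₗ act)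
    ∘ₗ (TensorProduct.leftComm k C H H).toLinearMap
    ∘ₗ TensorProduct.map LinearMap.id Coalgebra.comul

/-- The twisted comultiplication `Δ_τ(c) = c₁·c₂₋₁ ⊗ c₂₀`. -/
def DeltaT (τ : C →ₗ[k] H ⊗[k] C) : C →ₗ[k] C ⊗[k] C :=
  TensorProduct.map act LinearMap.id
    ∘ₗ (TensorProduct.assoc k C H C).symm.toLinearMap
    ∘ₗ TensorProduct.map LinearMap.id τ ∘ₗ Coalgebra.comul

/-- Left-hand side of (7). -/
def eq7L (τ : C →ₗ[k] H ⊗[k] C) : C →ₗ[k] H ⊗[k] (C ⊗[k] C) :=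
  TensorProduct.map LinearMap.id (DeltaT k H C act τ) ∘ₗ τ

/-- Right-hand side of (7). -/
def eq7R (τ : C →ₗ[k] H ⊗[k] C) : C →ₗ[k] H ⊗[k] (C ⊗[k] C) :=
  (TensorProduct.assoc k H C C).toLinearMap
    ∘ₗ TensorProduct.map
        (TensorProduct.map (LinearMap.mul' k H) act
          ∘ₗ (TensorProduct.tensorTensorTensorComm k H C H H).toLinearMap)
        LinearMap.id
    ∘ₗ (TensorProduct.assoc k (H ⊗[k] C) (H ⊗[k] H) C).symm.toLinearMap
    ∘ₗ TensorProduct.map LinearMap.id (TensorProduct.map Coalgebra.comul LinearMap.id)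
    ∘ₗ TensorProduct.map τ τ ∘ₗ Coalgebra.comul

/-- `τ : C → H ⊗ C` is a twisting of the right `H`-module coalgebra `(C, act)`. -/
def IsTwisting (τ : C →ₗ[k] H ⊗[k] C) : Prop :=
  ((TensorProduct.rid k H).toLinearMap ∘ₗ TensorProduct.map LinearMap.id Coalgebra.counit ∘ₗ τ
    = Algebra.linearMap k H ∘ₗ Coalgebra.counit) ∧
  ((TensorProduct.lid k C).toLinearMap ∘ₗ TensorProduct.map Coalgebra.counit LinearMap.id ∘ₗ τ
    = LinearMap.id) ∧
  (eq6L k H C act τ = eq6R k H C act τ) ∧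
  (eq7L k H C act τ = eq7R k H C act τ)

end TwistPaper


namespace TwistPaper
section Aux
variable {k : Type} [Field k]
variable {H : Type} [Ring H] [HopfAlgebra k H]
variable {C : Type} [AddCommGroup C] [Module k C] [Coalgebra k C]
variable (act : C ⊗[k] H →ₗ[k] C) (τ : C →ₗ[k] H ⊗[k] C)

private lemma lemKK (hact2 : ∀ (c : C) (g h : H), act (act (c ⊗ₜ g) ⊗ₜ h) = act (c ⊗ₜ (g * h))) :
    TensorProduct.map act LinearMap.id ∘ₗ (TensorProduct.assoc k C H C).symm.toLinearMap
      ∘ₗ TensorProduct.map act (LinearMap.id (M := H ⊗[k] C))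
    = TensorProduct.map act LinearMap.id ∘ₗ (TensorProduct.assoc k C H C).symm.toLinearMap
      ∘ₗ TensorProduct.map LinearMap.id
          (TensorProduct.map (LinearMap.mul' k H) LinearMap.id
            ∘ₗ (TensorProduct.assoc k H H C).symm.toLinearMap)
      ∘ₗ (TensorProduct.assoc k C H (H ⊗[k] C)).toLinearMap := by
  ext c h g x
  simp only [TensorProduct.AlgebraTensorModule.curry_apply, TensorProduct.curry_apply,
    LinearMap.coe_restrictScalars, LinearMap.comp_apply, LinearEquiv.coe_coe,
    TensorProduct.map_tmul, TensorProduct.assoc_tmul, TensorProduct.assoc_symm_tmul,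
    LinearMap.id_coe, id_eq, LinearMap.mul'_apply, hact2]

private lemma lemS1 (hact2 : ∀ (c : C) (g h : H), act (act (c ⊗ₜ g) ⊗ₜ h) = act (c ⊗ₜ (g * h))) :
    TensorProduct.map act act
      ∘ₗ (TensorProduct.tensorTensorTensorComm k C C H H).toLinearMap
      ∘ₗ TensorProduct.map
          (TensorProduct.map act LinearMap.id ∘ₗ (TensorProduct.assoc k C H C).symm.toLinearMap)
          (LinearMap.id (M := H ⊗[k] H))
    = TensorProduct.map act LinearMap.id ∘ₗ (TensorProduct.assoc k C H C).symm.toLinearMap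
      ∘ₗ TensorProduct.map LinearMap.id
          (TensorProduct.map (LinearMap.mul' k H) act
            ∘ₗ (TensorProduct.tensorTensorTensorComm k H C H H).toLinearMap)
      ∘ₗ (TensorProduct.assoc k C (H ⊗[k] C) (H ⊗[k] H)).toLinearMap := by
  ext c g x a b
  simp only [TensorProduct.AlgebraTensorModule.curry_apply, TensorProduct.curry_apply,
    LinearMap.coe_restrictScalars, LinearMap.comp_apply, LinearEquiv.coe_coe,
    TensorProduct.map_tmul, TensorProduct.assoc_tmul, TensorProduct.assoc_symm_tmul,
    TensorProduct.tensorTensorTensorComm_tmul,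
    LinearMap.id_coe, id_eq, LinearMap.mul'_apply, hact2]

private lemma lemNC : TensorProduct.map (LinearMap.id (M := C)) (TensorProduct.leftComm k C H H).toLinearMap
      ∘ₗ (TensorProduct.assoc k C C (H ⊗[k] H)).toLinearMap
    = (TensorProduct.assoc k C H (C ⊗[k] H)).toLinearMap
      ∘ₗ (TensorProduct.tensorTensorTensorComm k C C H H).toLinearMap := by
  ext c c' a b
  simp only [TensorProduct.AlgebraTensorModule.curry_apply, TensorProduct.curry_apply,
    LinearMap.coe_restrictScalars, LinearMap.comp_apply, LinearEquiv.coe_coe,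
    TensorProduct.map_tmul, TensorProduct.assoc_tmul, TensorProduct.leftComm_tmul,
    TensorProduct.tensorTensorTensorComm_tmul, LinearMap.id_coe, id_eq]

private lemma lemE2 : TensorProduct.map (LinearMap.id (M := C)) τ ∘ₗ TensorProduct.map act act
    = TensorProduct.map act LinearMap.id
      ∘ₗ TensorProduct.map (LinearMap.id (M := C ⊗[k] H)) (τ ∘ₗ act) := by
  ext; rfl


private lemma lemMerge1 :
    TensorProduct.map (LinearMap.id (M := C))
        (TensorProduct.map (LinearMap.mul' k H) act
          ∘ₗ (TensorProduct.tensorTensorTensorComm k H C H H).toLinearMap)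
      ∘ₗ TensorProduct.map LinearMap.id (TensorProduct.map τ Coalgebra.comul)
    = TensorProduct.map LinearMap.id (eq6L k H C act τ) := by
  rw [← TensorProduct.map_comp]; rfl

private lemma lemSplit6R :
    TensorProduct.map (LinearMap.id (M := C)) (eq6R k H C act τ)
    = TensorProduct.map LinearMap.id
        (TensorProduct.map (LinearMap.mul' k H) LinearMap.id
          ∘ₗ (TensorProduct.assoc k H H C).symm.toLinearMap)
      ∘ₗ TensorProduct.map LinearMap.id (TensorProduct.map LinearMap.id (τ ∘ₗ act))
      ∘ₗ TensorProduct.map LinearMap.id (TensorProduct.leftComm k C H H).toLinearMap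
      ∘ₗ TensorProduct.map LinearMap.id (TensorProduct.map LinearMap.id Coalgebra.comul) := by
  simp only [← TensorProduct.map_comp]; rfl

private lemma lemMerge2 :
    TensorProduct.map (LinearMap.id (M := C ⊗[k] C)) (Coalgebra.comul (R := k) (A := H))
      ∘ₗ TensorProduct.map Coalgebra.comul (LinearMap.id (M := H))
    = TensorProduct.map Coalgebra.comul Coalgebra.comul := by
  rw [← TensorProduct.map_comp]; rfl

private lemma compat (hact : IsModuleCoalg k H C act)
    (hτ6 : eq6L k H C act τ = eq6R k H C act τ) :
    DeltaT k H C act τ ∘ₗ act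
      = TensorProduct.map act act
          ∘ₗ (TensorProduct.tensorTensorTensorComm k C C H H).toLinearMap
          ∘ₗ TensorProduct.map (DeltaT k H C act τ) Coalgebra.comul := by
  obtain ⟨hact1, hact2, hact3, hact4⟩ := hact
  apply LinearMap.ext; intro x
  simp only [DeltaT, LinearMap.comp_apply, LinearEquiv.coe_coe]
  -- LHS chain
  have e1 := LinearMap.congr_fun hact3 x
  simp only [LinearMap.comp_apply, LinearEquiv.coe_coe] at e1
  rw [e1]
  have e2 := LinearMap.congr_fun (lemE2 act τ)
      ((TensorProduct.tensorTensorTensorComm k C C H H)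
        (TensorProduct.map Coalgebra.comul Coalgebra.comul x))
  simp only [LinearMap.comp_apply] at e2
  rw [e2]
  have e3 := LinearMap.congr_fun (lemKK act hact2)
      (TensorProduct.map LinearMap.id (τ ∘ₗ act)
        ((TensorProduct.tensorTensorTensorComm k C C H H)
          (TensorProduct.map Coalgebra.comul Coalgebra.comul x)))
  simp only [LinearMap.comp_apply, LinearEquiv.coe_coe] at e3
  rw [e3]
  -- RHS chain
  have hsplit : TensorProduct.map
        (TensorProduct.map act LinearMap.id ∘ₗ (TensorProduct.assoc k C H C).symm.toLinearMap
          ∘ₗ TensorProduct.map LinearMap.id τ ∘ₗ Coalgebra.comul)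
        (Coalgebra.comul (R := k) (A := H))
      = TensorProduct.map
          (TensorProduct.map act LinearMap.id ∘ₗ (TensorProduct.assoc k C H C).symm.toLinearMap)
          LinearMap.id
        ∘ₗ TensorProduct.map (TensorProduct.map LinearMap.id τ) Coalgebra.comul
        ∘ₗ TensorProduct.map Coalgebra.comul LinearMap.id := by
    rw [← TensorProduct.map_comp, ← TensorProduct.map_comp]; rfl
  have b1 := LinearMap.congr_fun hsplit x
  simp only [LinearMap.comp_apply] at b1
  rw [b1]
  have b2 := LinearMap.congr_fun (lemS1 act hact2)
      (TensorProduct.map (TensorProduct.map LinearMap.id τ) Coalgebra.comul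
        (TensorProduct.map Coalgebra.comul LinearMap.id x))
  simp only [LinearMap.comp_apply, LinearEquiv.coe_coe] at b2
  rw [b2, ← TensorProduct.map_map_assoc]
  have b4 := LinearMap.congr_fun (lemMerge1 act τ)
      ((TensorProduct.assoc k C C H) (TensorProduct.map Coalgebra.comul LinearMap.id x))
  simp only [LinearMap.comp_apply, LinearEquiv.coe_coe] at b4
  rw [b4, hτ6]
  have b5 := LinearMap.congr_fun (lemSplit6R act τ)
      ((TensorProduct.assoc k C C H) (TensorProduct.map Coalgebra.comul LinearMap.id x))
  simp only [LinearMap.comp_apply, LinearEquiv.coe_coe] at b5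
  rw [b5, TensorProduct.map_map_assoc, TensorProduct.map_id]
  have b7 := LinearMap.congr_fun (lemMerge2 (k := k) (H := H) (C := C)) x
  simp only [LinearMap.comp_apply] at b7
  rw [b7]
  have b8 := LinearMap.congr_fun (lemNC (k := k) (H := H) (C := C))
      (TensorProduct.map Coalgebra.comul Coalgebra.comul x)
  simp only [LinearMap.comp_apply, LinearEquiv.coe_coe] at b8
  rw [b8, TensorProduct.map_map_assoc, TensorProduct.map_id]

private lemma lemXI (hact2 : ∀ (c : C) (g h : H), act (act (c ⊗ₜ g) ⊗ₜ h) = act (c ⊗ₜ (g * h))) :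
    (TensorProduct.assoc k C C C).toLinearMap
      ∘ₗ TensorProduct.map (TensorProduct.map act act) LinearMap.id
      ∘ₗ TensorProduct.map (TensorProduct.tensorTensorTensorComm k C C H H).toLinearMap
          LinearMap.id
      ∘ₗ TensorProduct.map
          (TensorProduct.map
            (TensorProduct.map act LinearMap.id ∘ₗ (TensorProduct.assoc k C H C).symm.toLinearMap)
            (LinearMap.id (M := H ⊗[k] H)))
          (LinearMap.id (M := C))
      ∘ₗ (TensorProduct.assoc k (C ⊗[k] (H ⊗[k] C)) (H ⊗[k] H) C).symm.toLinearMap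
      ∘ₗ TensorProduct.map LinearMap.id
          (TensorProduct.map (Coalgebra.comul (R := k) (A := H)) (LinearMap.id (M := C)))
      ∘ₗ (TensorProduct.assoc k C (H ⊗[k] C) (H ⊗[k] C)).symm.toLinearMap
    = TensorProduct.map act LinearMap.id
      ∘ₗ (TensorProduct.assoc k C H (C ⊗[k] C)).symm.toLinearMap
      ∘ₗ TensorProduct.map LinearMap.id
          ((TensorProduct.assoc k H C C).toLinearMap
            ∘ₗ TensorProduct.map
                (TensorProduct.map (LinearMap.mul' k H) act
                  ∘ₗ (TensorProduct.tensorTensorTensorComm k H C H H).toLinearMap)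
                LinearMap.id
            ∘ₗ (TensorProduct.assoc k (H ⊗[k] C) (H ⊗[k] H) C).symm.toLinearMap
            ∘ₗ TensorProduct.map LinearMap.id
                (TensorProduct.map (Coalgebra.comul (R := k) (A := H)) (LinearMap.id (M := C)))) := by
  ext c g x a y
  simp only [TensorProduct.AlgebraTensorModule.curry_apply, TensorProduct.curry_apply,
    LinearMap.coe_restrictScalars, LinearMap.comp_apply, LinearEquiv.coe_coe,
    TensorProduct.map_tmul, TensorProduct.assoc_tmul, TensorProduct.assoc_symm_tmul,
    LinearMap.id_coe, id_eq]
  induction (Coalgebra.comul (R := k) a) using TensorProduct.induction_on with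
  | zero => simp
  | tmul a₁ a₂ =>
      simp only [TensorProduct.assoc_symm_tmul, TensorProduct.map_tmul,
        TensorProduct.tensorTensorTensorComm_tmul, TensorProduct.assoc_tmul,
        LinearMap.id_coe, id_eq, LinearMap.comp_apply, LinearEquiv.coe_coe,
        LinearMap.mul'_apply, hact2]
  | add u v hu hv =>
      simp only [TensorProduct.tmul_add, TensorProduct.add_tmul, map_add, hu, hv]

private lemma lemSwap {M N P Q : Type} [AddCommGroup M] [Module k M] [AddCommGroup N]
    [Module k N] [AddCommGroup P] [Module k P] [AddCommGroup Q] [Module k Q]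
    (u : M →ₗ[k] N) (g : P →ₗ[k] Q) :
    TensorProduct.map u LinearMap.id ∘ₗ TensorProduct.map LinearMap.id g
    = TensorProduct.map LinearMap.id g ∘ₗ TensorProduct.map u LinearMap.id := by
  rw [← TensorProduct.map_comp, ← TensorProduct.map_comp]; rfl

private lemma lemCo : TensorProduct.map (LinearMap.id (M := C)) Coalgebra.comul
      ∘ₗ Coalgebra.comul
    = (TensorProduct.assoc k C C C).toLinearMap
      ∘ₗ TensorProduct.map Coalgebra.comul LinearMap.id ∘ₗ Coalgebra.comul :=
  Coalgebra.coassoc.symm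

private lemma lemNat3 (g : C →ₗ[k] C ⊗[k] C) :
    TensorProduct.map (LinearMap.id (M := C ⊗[k] H)) g
      ∘ₗ (TensorProduct.assoc k C H C).symm.toLinearMap
    = (TensorProduct.assoc k C H (C ⊗[k] C)).symm.toLinearMap
      ∘ₗ TensorProduct.map LinearMap.id (TensorProduct.map LinearMap.id g) := by
  ext c h x
  simp only [TensorProduct.AlgebraTensorModule.curry_apply, TensorProduct.curry_apply,
    LinearMap.coe_restrictScalars, LinearMap.comp_apply, LinearEquiv.coe_coe,
    TensorProduct.map_tmul, TensorProduct.assoc_symm_tmul, LinearMap.id_coe, id_eq]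

private lemma lemMergeR2 :
    TensorProduct.map (LinearMap.id (M := C))
        (TensorProduct.map LinearMap.id (DeltaT k H C act τ))
      ∘ₗ TensorProduct.map LinearMap.id τ
    = TensorProduct.map LinearMap.id (eq7L k H C act τ) := by
  rw [← TensorProduct.map_comp]; rfl

private lemma lemSplit7R :
    TensorProduct.map (LinearMap.id (M := C)) (eq7R k H C act τ)
    = TensorProduct.map LinearMap.id
        ((TensorProduct.assoc k H C C).toLinearMap
          ∘ₗ TensorProduct.map
              (TensorProduct.map (LinearMap.mul' k H) act
                ∘ₗ (TensorProduct.tensorTensorTensorComm k H C H H).toLinearMap)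
              LinearMap.id
          ∘ₗ (TensorProduct.assoc k (H ⊗[k] C) (H ⊗[k] H) C).symm.toLinearMap
          ∘ₗ TensorProduct.map LinearMap.id
              (TensorProduct.map (Coalgebra.comul (R := k) (A := H)) (LinearMap.id (M := C))))
      ∘ₗ TensorProduct.map LinearMap.id (TensorProduct.map τ τ)
      ∘ₗ TensorProduct.map LinearMap.id Coalgebra.comul := by
  simp only [← TensorProduct.map_comp]; rfl

private lemma lemMergeL :
    TensorProduct.map (DeltaT k H C act τ) LinearMap.id ∘ₗ TensorProduct.map act LinearMap.id
    = TensorProduct.map (DeltaT k H C act τ ∘ₗ act) (LinearMap.id (M := C)) := by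
  rw [← TensorProduct.map_comp]; rfl

private lemma lemSplitD :
    TensorProduct.map (DeltaT k H C act τ) (Coalgebra.comul (R := k) (A := H))
    = TensorProduct.map
        (TensorProduct.map act LinearMap.id ∘ₗ (TensorProduct.assoc k C H C).symm.toLinearMap)
        LinearMap.id
      ∘ₗ TensorProduct.map (TensorProduct.map LinearMap.id τ) Coalgebra.comul
      ∘ₗ TensorProduct.map Coalgebra.comul LinearMap.id := by
  rw [← TensorProduct.map_comp, ← TensorProduct.map_comp]; rfl

private lemma lemSplit5 :
    TensorProduct.map
        (TensorProduct.map act act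
          ∘ₗ (TensorProduct.tensorTensorTensorComm k C C H H).toLinearMap
          ∘ₗ (TensorProduct.map
                (TensorProduct.map act LinearMap.id
                  ∘ₗ (TensorProduct.assoc k C H C).symm.toLinearMap)
                LinearMap.id
              ∘ₗ TensorProduct.map (TensorProduct.map LinearMap.id τ) Coalgebra.comul
              ∘ₗ TensorProduct.map Coalgebra.comul LinearMap.id))
        (LinearMap.id (M := C))
    = TensorProduct.map (TensorProduct.map act act) LinearMap.id
      ∘ₗ TensorProduct.map (TensorProduct.tensorTensorTensorComm k C C H H).toLinearMap
          LinearMap.id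
      ∘ₗ TensorProduct.map
          (TensorProduct.map
            (TensorProduct.map act LinearMap.id ∘ₗ (TensorProduct.assoc k C H C).symm.toLinearMap)
            (LinearMap.id (M := H ⊗[k] H)))
          (LinearMap.id (M := C))
      ∘ₗ TensorProduct.map (TensorProduct.map (TensorProduct.map LinearMap.id τ) Coalgebra.comul)
          LinearMap.id
      ∘ₗ TensorProduct.map (TensorProduct.map Coalgebra.comul LinearMap.id) LinearMap.id := by
  simp only [← TensorProduct.map_comp]; rfl

private lemma lemN4 :
    TensorProduct.map (TensorProduct.map (LinearMap.id (M := C)) τ)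
        (TensorProduct.map (Coalgebra.comul (R := k) (A := H)) (LinearMap.id (M := C)))
      ∘ₗ TensorProduct.map LinearMap.id τ
    = TensorProduct.map LinearMap.id
        (TensorProduct.map (Coalgebra.comul (R := k) (A := H)) LinearMap.id)
      ∘ₗ TensorProduct.map (TensorProduct.map LinearMap.id τ) τ := by
  rw [← TensorProduct.map_comp, ← TensorProduct.map_comp]; rfl

private lemma coassocT (hact : IsModuleCoalg k H C act)
    (hτ6 : eq6L k H C act τ = eq6R k H C act τ)
    (hτ7 : eq7L k H C act τ = eq7R k H C act τ) :
    (TensorProduct.assoc k C C C).toLinearMap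
        ∘ₗ TensorProduct.map (DeltaT k H C act τ) LinearMap.id ∘ₗ DeltaT k H C act τ
      = TensorProduct.map LinearMap.id (DeltaT k H C act τ) ∘ₗ DeltaT k H C act τ := by
  have hcompat := compat act τ hact hτ6
  obtain ⟨hact1, hact2, hact3, hact4⟩ := hact
  apply LinearMap.ext; intro c
  simp only [LinearMap.comp_apply, LinearEquiv.coe_coe]
  have hDc : DeltaT k H C act τ c
      = TensorProduct.map act LinearMap.id
          ((TensorProduct.assoc k C H C).symm
            (TensorProduct.map LinearMap.id τ (Coalgebra.comul c))) := rfl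
  rw [hDc]
  -- RHS chain
  have r1 := LinearMap.congr_fun (lemSwap (k := k) act (DeltaT k H C act τ))
      ((TensorProduct.assoc k C H C).symm (TensorProduct.map LinearMap.id τ (Coalgebra.comul c)))
  simp only [LinearMap.comp_apply] at r1
  rw [← r1]
  have r1b := LinearMap.congr_fun (lemNat3 (k := k) (H := H) (DeltaT k H C act τ))
      (TensorProduct.map LinearMap.id τ (Coalgebra.comul c))
  simp only [LinearMap.comp_apply, LinearEquiv.coe_coe] at r1b
  rw [r1b]
  have r2 := LinearMap.congr_fun (lemMergeR2 act τ) (Coalgebra.comul c)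
  simp only [LinearMap.comp_apply] at r2
  rw [r2, hτ7]
  have r4 := LinearMap.congr_fun (lemSplit7R act τ) (Coalgebra.comul c)
  simp only [LinearMap.comp_apply] at r4
  rw [r4]
  have r5 := LinearMap.congr_fun (lemCo (k := k) (C := C)) c
  simp only [LinearMap.comp_apply, LinearEquiv.coe_coe] at r5
  rw [r5]
  -- LHS chain
  have l1 := LinearMap.congr_fun (lemMergeL act τ)
      ((TensorProduct.assoc k C H C).symm (TensorProduct.map LinearMap.id τ (Coalgebra.comul c)))
  simp only [LinearMap.comp_apply] at l1
  rw [l1, hcompat, lemSplitD act τ]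
  have l4 := LinearMap.congr_fun (lemSplit5 act τ)
      ((TensorProduct.assoc k C H C).symm (TensorProduct.map LinearMap.id τ (Coalgebra.comul c)))
  simp only [LinearMap.comp_apply] at l4
  rw [l4]
  have n1 := TensorProduct.map_map_assoc_symm (Coalgebra.comul (R := k) (A := C))
      (LinearMap.id (M := H)) (LinearMap.id (M := C))
      (TensorProduct.map LinearMap.id τ (Coalgebra.comul c))
  rw [TensorProduct.map_id] at n1
  rw [n1]
  have n2 := LinearMap.congr_fun (lemSwap (k := k) (Coalgebra.comul (R := k) (A := C)) τ)
      (Coalgebra.comul c)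
  simp only [LinearMap.comp_apply] at n2
  rw [n2]
  have n3 := TensorProduct.map_map_assoc_symm
      (TensorProduct.map (LinearMap.id (M := C)) τ) (Coalgebra.comul (R := k) (A := H))
      (LinearMap.id (M := C))
      (TensorProduct.map LinearMap.id τ
        (TensorProduct.map Coalgebra.comul LinearMap.id (Coalgebra.comul c)))
  rw [n3]
  have n4 := LinearMap.congr_fun (lemN4 (k := k) τ)
      (TensorProduct.map Coalgebra.comul LinearMap.id (Coalgebra.comul c))
  simp only [LinearMap.comp_apply] at n4
  rw [n4]
  have n5 := TensorProduct.map_map_assoc_symm (LinearMap.id (M := C)) τ τ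
      ((TensorProduct.assoc k C C C)
        (TensorProduct.map Coalgebra.comul LinearMap.id (Coalgebra.comul c)))
  rw [LinearEquiv.symm_apply_apply] at n5
  rw [n5]
  have xi := LinearMap.congr_fun (lemXI act hact2)
      (TensorProduct.map LinearMap.id (TensorProduct.map τ τ)
        ((TensorProduct.assoc k C C C)
          (TensorProduct.map Coalgebra.comul LinearMap.id (Coalgebra.comul c))))
  simp only [LinearMap.comp_apply, LinearEquiv.coe_coe] at xi
  rw [xi]

private lemma counitL (hact : IsModuleCoalg k H C act)
    (hτ2 : (TensorProduct.lid k C).toLinearMap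
      ∘ₗ TensorProduct.map Coalgebra.counit LinearMap.id ∘ₗ τ = LinearMap.id) :
    (TensorProduct.lid k C).toLinearMap
        ∘ₗ TensorProduct.map Coalgebra.counit LinearMap.id ∘ₗ DeltaT k H C act τ
      = LinearMap.id := by
  obtain ⟨hact1, hact2, hact3, hact4⟩ := hact
  set P : H ⊗[k] C →ₗ[k] C :=
    (TensorProduct.lid k C).toLinearMap ∘ₗ TensorProduct.map Coalgebra.counit LinearMap.id with hP
  have HA : (TensorProduct.lid k C).toLinearMap
      ∘ₗ TensorProduct.map Coalgebra.counit LinearMap.id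
      ∘ₗ TensorProduct.map act LinearMap.id
      ∘ₗ (TensorProduct.assoc k C H C).symm.toLinearMap
    = (TensorProduct.lid k C).toLinearMap ∘ₗ TensorProduct.map Coalgebra.counit P := by
    ext c h x
    have h4 := LinearMap.congr_fun hact4 (c ⊗ₜ[k] h)
    simp only [LinearMap.comp_apply, TensorProduct.map_tmul, LinearEquiv.coe_coe,
      TensorProduct.lid_tmul, LinearMap.id_coe, id_eq] at h4
    simp only [hP, TensorProduct.AlgebraTensorModule.curry_apply, TensorProduct.curry_apply,
      LinearMap.coe_restrictScalars, LinearMap.comp_apply, LinearEquiv.coe_coe,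
      TensorProduct.assoc_symm_tmul, TensorProduct.map_tmul, LinearMap.id_coe, id_eq,
      TensorProduct.lid_tmul, h4, smul_smul, smul_eq_mul]
  have hPτ : P ∘ₗ τ = LinearMap.id := by rw [hP, LinearMap.comp_assoc]; exact hτ2
  ext c
  have hDc : DeltaT k H C act τ c
      = TensorProduct.map act LinearMap.id
          ((TensorProduct.assoc k C H C).symm
            (TensorProduct.map LinearMap.id τ (Coalgebra.comul c))) := rfl
  have ha := LinearMap.congr_fun HA
      (TensorProduct.map LinearMap.id τ (Coalgebra.comul (R := k) c))
  have hsplit := LinearMap.congr_fun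
      (TensorProduct.map_comp (Coalgebra.counit (R := k) (A := C)) P LinearMap.id τ)
      (Coalgebra.comul (R := k) c)
  simp only [LinearMap.comp_apply, LinearEquiv.coe_coe] at ha hsplit hDc ⊢
  rw [hDc, ha, ← hsplit, LinearMap.comp_id, hPτ]
  have h9 : TensorProduct.map (Coalgebra.counit (R := k) (A := C)) (LinearMap.id (M := C))
      = (Coalgebra.counit (R := k) (A := C)).rTensor C := rfl
  rw [h9, Coalgebra.rTensor_counit_comul]
  simp

private lemma counitR (hact : IsModuleCoalg k H C act)
    (hτ1 : (TensorProduct.rid k H).toLinearMap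
      ∘ₗ TensorProduct.map LinearMap.id Coalgebra.counit ∘ₗ τ
      = Algebra.linearMap k H ∘ₗ Coalgebra.counit) :
    (TensorProduct.rid k C).toLinearMap
        ∘ₗ TensorProduct.map LinearMap.id Coalgebra.counit ∘ₗ DeltaT k H C act τ
      = LinearMap.id := by
  obtain ⟨hact1, hact2, hact3, hact4⟩ := hact
  set Q : H ⊗[k] C →ₗ[k] H :=
    (TensorProduct.rid k H).toLinearMap ∘ₗ TensorProduct.map LinearMap.id Coalgebra.counit with hQ
  have H3a : (TensorProduct.rid k C).toLinearMap
      ∘ₗ TensorProduct.map LinearMap.id Coalgebra.counit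
      ∘ₗ TensorProduct.map act LinearMap.id
      ∘ₗ (TensorProduct.assoc k C H C).symm.toLinearMap
    = act ∘ₗ TensorProduct.map LinearMap.id Q := by
    ext c h x
    simp only [hQ, TensorProduct.AlgebraTensorModule.curry_apply, TensorProduct.curry_apply,
      LinearMap.coe_restrictScalars, LinearMap.comp_apply, LinearEquiv.coe_coe,
      TensorProduct.assoc_symm_tmul, TensorProduct.map_tmul, LinearMap.id_coe, id_eq,
      TensorProduct.rid_tmul, TensorProduct.tmul_smul, map_smul]
  have hQτ : Q ∘ₗ τ = Algebra.linearMap k H ∘ₗ Coalgebra.counit :=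
    LinearMap.ext fun x => LinearMap.congr_fun hτ1 x
  have H3d : act ∘ₗ TensorProduct.map LinearMap.id
        (Algebra.linearMap k H ∘ₗ (Coalgebra.counit (R := k) (A := C)))
      = (TensorProduct.rid k C).toLinearMap
        ∘ₗ TensorProduct.map LinearMap.id Coalgebra.counit := by
    ext c x
    simp only [TensorProduct.AlgebraTensorModule.curry_apply, TensorProduct.curry_apply,
      LinearMap.coe_restrictScalars, LinearMap.comp_apply, TensorProduct.map_tmul,
      LinearMap.id_coe, id_eq, Algebra.linearMap_apply, LinearEquiv.coe_coe,
      TensorProduct.rid_tmul, Algebra.algebraMap_eq_smul_one, TensorProduct.tmul_smul,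
      map_smul, hact1]
  ext c
  have hDc : DeltaT k H C act τ c
      = TensorProduct.map act LinearMap.id
          ((TensorProduct.assoc k C H C).symm
            (TensorProduct.map LinearMap.id τ (Coalgebra.comul c))) := rfl
  have ha := LinearMap.congr_fun H3a
      (TensorProduct.map LinearMap.id τ (Coalgebra.comul (R := k) c))
  have hsplit := LinearMap.congr_fun
      (TensorProduct.map_comp (LinearMap.id (M := C)) Q LinearMap.id τ)
      (Coalgebra.comul (R := k) c)
  have hd := LinearMap.congr_fun H3d (Coalgebra.comul (R := k) c)
  simp only [LinearMap.comp_apply, LinearMap.id_comp, LinearEquiv.coe_coe] at ha hsplit hd hDc ⊢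
  rw [hDc, ha, ← hsplit, hQτ, hd]
  have h9 : TensorProduct.map (LinearMap.id (M := C)) (Coalgebra.counit (R := k) (A := C))
      = (Coalgebra.counit (R := k) (A := C)).lTensor C := rfl
  rw [h9, Coalgebra.lTensor_counit_comul]
  simp

end Aux
end TwistPaper

/-- if `τ` is a twisting of the right `H`-module coalgebra `C`, then
`C^τ` (same `H`-action, comultiplication `Δ_τ(c) = c₁·c₂₋₁ ⊗ c₂₀`, same counit)
is again a right `H`-module coalgebra: `Δ_τ` is coassociative, counital, and
compatible with the `H`-action. -/
theorem TwistPaper.twisting_gives_module_coalgebra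
    (act : C ⊗[k] H →ₗ[k] C) (hact : IsModuleCoalg k H C act)
    (τ : C →ₗ[k] H ⊗[k] C) (hτ : IsTwisting k H C act τ) :
    -- coassociativity of Δ_τ
    ((TensorProduct.assoc k C C C).toLinearMap
        ∘ₗ TensorProduct.map (DeltaT k H C act τ) LinearMap.id ∘ₗ DeltaT k H C act τ
      = TensorProduct.map LinearMap.id (DeltaT k H C act τ) ∘ₗ DeltaT k H C act τ) ∧
    -- counit laws for Δ_τ
    ((TensorProduct.lid k C).toLinearMap
        ∘ₗ TensorProduct.map Coalgebra.counit LinearMap.id ∘ₗ DeltaT k H C act τ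
      = LinearMap.id) ∧
    ((TensorProduct.rid k C).toLinearMap
        ∘ₗ TensorProduct.map LinearMap.id Coalgebra.counit ∘ₗ DeltaT k H C act τ
      = LinearMap.id) ∧
    -- `Δ_τ(c·h) = (c₁·h₁) ·' ⊗ ...` : compatibility of Δ_τ with the H-action
    (DeltaT k H C act τ ∘ₗ act
      = TensorProduct.map act act
          ∘ₗ (TensorProduct.tensorTensorTensorComm k C C H H).toLinearMap
          ∘ₗ TensorProduct.map (DeltaT k H C act τ) Coalgebra.comul) ∧
    -- counit compatibility with the H-action (the counit is unchanged)
    ((Coalgebra.counit : C →ₗ[k] k) ∘ₗ act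
      = (TensorProduct.lid k k).toLinearMap
          ∘ₗ TensorProduct.map Coalgebra.counit Coalgebra.counit) :=
  ⟨coassocT act τ hact hτ.2.2.1 hτ.2.2.2,
   counitL act τ hact hτ.2.1,
   counitR act τ hact hτ.1,
   compat act τ hact hτ.2.2.1,
   hact.2.2.2⟩
end
end

section
/- ε_α(c ⋊ h) = ε_C(c)ε_H(h) is a counit for the crossed coproduct comultiplication Δ_α(c ⋊ h) = (c₁ ⋊ c_{2[-1]} α₁(c₃) h₁) ⊗ (c_{2[0]} ⋊ α₂(c₃) h₂) if and only if (ε_H ⊗ id)α(c) = (id ⊗ ε_H)α(c) = ε_C(c)1_H for all c ∈ C. -/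
open TensorProduct LinearMap Coalgebra

noncomputable section

variable (k : Type) [Field k]
variable (H : Type) [Ring H] [HopfAlgebra k H]
variable (C : Type) [AddCommGroup C] [Module k C] [Coalgebra k C]

namespace TwistPaper

variable (ρ : C →ₗ[k] H ⊗[k] C) (α : C →ₗ[k] H ⊗[k] H)

/-- Iterated comultiplication `c ↦ c₁ ⊗ (c₂ ⊗ c₃)`. -/
def comul₂ : C →ₗ[k] C ⊗[k] (C ⊗[k] C) :=
  TensorProduct.map LinearMap.id Coalgebra.comul ∘ₗ Coalgebra.comul

/-- `ρ` is a weak coaction of `H` on `C` (conditions (14)–(16)). -/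
def IsWeakCoaction : Prop :=
  (TensorProduct.map LinearMap.id Coalgebra.comul ∘ₗ ρ
    = TensorProduct.map (LinearMap.mul' k H) LinearMap.id
        ∘ₗ (TensorProduct.tensorTensorTensorComm k H C H C).toLinearMap
        ∘ₗ TensorProduct.map ρ ρ ∘ₗ Coalgebra.comul) ∧
  ((TensorProduct.rid k H).toLinearMap ∘ₗ TensorProduct.map LinearMap.id Coalgebra.counit ∘ₗ ρ
    = Algebra.linearMap k H ∘ₗ Coalgebra.counit) ∧
  ((TensorProduct.lid k C).toLinearMap ∘ₗ TensorProduct.map Coalgebra.counit LinearMap.id ∘ₗ ρ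
    = LinearMap.id)

/-- The counit condition (I) on `α : C → H ⊗ H`. -/
def CocycleCounit : Prop :=
  ((TensorProduct.lid k H).toLinearMap ∘ₗ TensorProduct.map Coalgebra.counit LinearMap.id ∘ₗ α
    = Algebra.linearMap k H ∘ₗ Coalgebra.counit) ∧
  ((TensorProduct.rid k H).toLinearMap ∘ₗ TensorProduct.map LinearMap.id Coalgebra.counit ∘ₗ α
    = Algebra.linearMap k H ∘ₗ Coalgebra.counit)

/-- `(c ⊗ 1) ⋊ h`-free part of the crossed coproduct:
`ψ(c) = (c₁ ⊗ c₂₍₋₁₎α₁(c₃)) ⊗ (c₂₍₀₎ ⊗ α₂(c₃))`. -/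
def psiMap : C →ₗ[k] (C ⊗[k] H) ⊗[k] (C ⊗[k] H) :=
  (TensorProduct.assoc k C H (C ⊗[k] H)).symm.toLinearMap
    ∘ₗ TensorProduct.map LinearMap.id
        (TensorProduct.map (LinearMap.mul' k H) LinearMap.id
          ∘ₗ (TensorProduct.tensorTensorTensorComm k H C H H).toLinearMap
          ∘ₗ TensorProduct.map ρ α)
    ∘ₗ comul₂ k C

/-- Right multiplication by `H` on the second tensorand of `C ⊗ H`. -/
def m2 : (C ⊗[k] H) ⊗[k] H →ₗ[k] C ⊗[k] H :=
  TensorProduct.map LinearMap.id (LinearMap.mul' k H)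
    ∘ₗ (TensorProduct.assoc k C H H).toLinearMap

/-- The crossed coproduct comultiplication
`Δ_α(c ⊗ h) = (c₁ ⊗ c₂₍₋₁₎α₁(c₃)h₁) ⊗ (c₂₍₀₎ ⊗ α₂(c₃)h₂)`. -/
def DeltaAl : C ⊗[k] H →ₗ[k] (C ⊗[k] H) ⊗[k] (C ⊗[k] H) :=
  TensorProduct.map (m2 k H C) (m2 k H C)
    ∘ₗ (TensorProduct.tensorTensorTensorComm k (C ⊗[k] H) (C ⊗[k] H) H H).toLinearMap
    ∘ₗ TensorProduct.map (psiMap k H C ρ α) Coalgebra.comul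

/-- The crossed coproduct counit `ε_α(c ⊗ h) = ε(c)ε(h)`. -/
def epsAl : C ⊗[k] H →ₗ[k] k :=
  (TensorProduct.lid k k).toLinearMap
    ∘ₗ TensorProduct.map Coalgebra.counit Coalgebra.counit

/-- `(x ⊗ y) ⊗ z ↦ xz ⊗ y` on `(H ⊗ C) ⊗ H`. -/
def rAct : (H ⊗[k] C) ⊗[k] H →ₗ[k] H ⊗[k] C :=
  TensorProduct.map (LinearMap.mul' k H) LinearMap.id
    ∘ₗ (TensorProduct.assoc k H H C).symm.toLinearMap
    ∘ₗ TensorProduct.map LinearMap.id (TensorProduct.comm k C H).toLinearMap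
    ∘ₗ (TensorProduct.assoc k H C H).toLinearMap

/-- Left-hand side of the cocycle condition (II). -/
def eqIIL : C →ₗ[k] H ⊗[k] (H ⊗[k] H) :=
  LinearMap.mul' k (H ⊗[k] (H ⊗[k] H))
    ∘ₗ TensorProduct.map
        (TensorProduct.map LinearMap.id α ∘ₗ ρ)
        (TensorProduct.map LinearMap.id Coalgebra.comul ∘ₗ α)
    ∘ₗ Coalgebra.comul

/-- Right-hand side of the cocycle condition (II). -/
def eqIIR : C →ₗ[k] H ⊗[k] (H ⊗[k] H) :=
  LinearMap.mul' k (H ⊗[k] (H ⊗[k] H))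
    ∘ₗ TensorProduct.map
        (TensorProduct.map LinearMap.id ((TensorProduct.mk k H H).flip 1) ∘ₗ α)
        ((TensorProduct.assoc k H H H).toLinearMap
          ∘ₗ TensorProduct.map Coalgebra.comul LinearMap.id ∘ₗ α)
    ∘ₗ Coalgebra.comul

/-- Left-hand side of the twisted comodule condition (III). -/
def eqIIIL : C →ₗ[k] H ⊗[k] (H ⊗[k] C) :=
  TensorProduct.map (LinearMap.mul' k H) (rAct k H C)
    ∘ₗ (TensorProduct.tensorTensorTensorComm k H (H ⊗[k] C) H H).toLinearMap
    ∘ₗ TensorProduct.map (TensorProduct.map LinearMap.id ρ ∘ₗ ρ) α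
    ∘ₗ Coalgebra.comul

/-- Right-hand side of the twisted comodule condition (III). -/
def eqIIIR : C →ₗ[k] H ⊗[k] (H ⊗[k] C) :=
  (TensorProduct.assoc k H H C).toLinearMap
    ∘ₗ TensorProduct.map
        (TensorProduct.map (LinearMap.mul' k H) (LinearMap.mul' k H)
          ∘ₗ (TensorProduct.tensorTensorTensorComm k H H H H).toLinearMap)
        LinearMap.id
    ∘ₗ (TensorProduct.assoc k (H ⊗[k] H) (H ⊗[k] H) C).symm.toLinearMap
    ∘ₗ TensorProduct.map α (TensorProduct.map Coalgebra.comul LinearMap.id ∘ₗ ρ)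
    ∘ₗ Coalgebra.comul

/-- `α` is a Harrison 2-cocycle with respect to the weak coaction `ρ`. -/
def IsHarrison : Prop :=
  CocycleCounit k H C α ∧ eqIIL k H C ρ α = eqIIR k H C α ∧
    eqIIIL k H C ρ α = eqIIIR k H C ρ α

/-- Convolution product on `Hom(C, H)`. -/
def convH (u v : C →ₗ[k] H) : C →ₗ[k] H :=
  LinearMap.mul' k H ∘ₗ TensorProduct.map u v ∘ₗ Coalgebra.comul

/-- The convolution unit `c ↦ ε(c)1`. -/
def unitH : C →ₗ[k] H := Algebra.linearMap k H ∘ₗ Coalgebra.counit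

end TwistPaper
namespace TwistPaper

section AuxCounit

variable (A M N : Type) [AddCommGroup A] [Module k A] [Coalgebra k A]
  [AddCommGroup M] [Module k M] [AddCommGroup N] [Module k N]

lemma aux_counit_smul_sum {a : A} (r : Coalgebra.Repr k a (A × A)) :
    ∑ i ∈ r.index, Coalgebra.counit (R := k) (r.left i) • r.right i = a := by
  calc ∑ i ∈ r.index, Coalgebra.counit (R := k) (r.left i) • r.right i
      = TensorProduct.lid k A (∑ i ∈ r.index,
          Coalgebra.counit (R := k) (r.left i) ⊗ₜ[k] r.right i) := by
        rw [map_sum]; simp only [TensorProduct.lid_tmul]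
    _ = TensorProduct.lid k A ((1 : k) ⊗ₜ[k] a) := by rw [Coalgebra.sum_counit_tmul_eq r]
    _ = a := by simp

lemma aux_smul_counit_sum {a : A} (r : Coalgebra.Repr k a (A × A)) :
    ∑ i ∈ r.index, Coalgebra.counit (R := k) (r.right i) • r.left i = a := by
  calc ∑ i ∈ r.index, Coalgebra.counit (R := k) (r.right i) • r.left i
      = TensorProduct.rid k A (∑ i ∈ r.index,
          r.left i ⊗ₜ[k] Coalgebra.counit (R := k) (r.right i)) := by
        rw [map_sum]; simp only [TensorProduct.rid_tmul]
    _ = TensorProduct.rid k A (a ⊗ₜ[k] (1 : k)) := by rw [Coalgebra.sum_tmul_counit_eq r]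
    _ = a := by simp

/-- `(ε ⊗ F) ∘ Δ = F` (up to `lid`). -/
lemma aux_lid_counit_map (F : A →ₗ[k] M) :
    (TensorProduct.lid k M).toLinearMap
        ∘ₗ TensorProduct.map Coalgebra.counit F ∘ₗ Coalgebra.comul = F := by
  ext a
  simp only [LinearMap.comp_apply, LinearEquiv.coe_coe, LinearMap.id_apply]
  have r := ℛ k a
  rw [← r.eq]
  simp only [map_sum, TensorProduct.map_tmul, TensorProduct.lid_tmul]
  rw [show ∑ i ∈ r.index, Coalgebra.counit (R := k) (r.left i) • F (r.right i)
      = F (∑ i ∈ r.index, Coalgebra.counit (R := k) (r.left i) • r.right i) by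
    simp [map_sum]]
  rw [aux_counit_smul_sum k A r]

/-- `(F ⊗ ε) ∘ Δ = F` (up to `rid`). -/
lemma aux_rid_counit_map (F : A →ₗ[k] M) :
    (TensorProduct.rid k M).toLinearMap
        ∘ₗ TensorProduct.map F Coalgebra.counit ∘ₗ Coalgebra.comul = F := by
  ext a
  simp only [LinearMap.comp_apply, LinearEquiv.coe_coe, LinearMap.id_apply]
  have r := ℛ k a
  rw [← r.eq]
  simp only [map_sum, TensorProduct.map_tmul, TensorProduct.rid_tmul]
  rw [show ∑ i ∈ r.index, Coalgebra.counit (R := k) (r.right i) • F (r.left i)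
      = F (∑ i ∈ r.index, Coalgebra.counit (R := k) (r.right i) • r.left i) by
    simp [map_sum]]
  rw [aux_smul_counit_sum k A r]

end AuxCounit


section Structural

set_option maxRecDepth 8000

/-- Auxiliary map `Φ w : c ⊗ h ↦ c₁ ⊗ w(c₂)h`. -/
def Phi (w : C →ₗ[k] H) : C ⊗[k] H →ₗ[k] C ⊗[k] H :=
  m2 k H C ∘ₗ TensorProduct.map
    (TensorProduct.map LinearMap.id w ∘ₗ Coalgebra.comul) LinearMap.id

lemma A1left :
    (TensorProduct.lid k (C ⊗[k] H)).toLinearMap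
      ∘ₗ TensorProduct.map (epsAl k H C) LinearMap.id
      ∘ₗ TensorProduct.map (m2 k H C) (m2 k H C)
      ∘ₗ (TensorProduct.tensorTensorTensorComm k (C ⊗[k] H) (C ⊗[k] H) H H).toLinearMap
    = m2 k H C ∘ₗ TensorProduct.map
        ((TensorProduct.lid k (C ⊗[k] H)).toLinearMap
          ∘ₗ TensorProduct.map (epsAl k H C) LinearMap.id)
        ((TensorProduct.lid k H).toLinearMap
          ∘ₗ TensorProduct.map Coalgebra.counit LinearMap.id) := by
  ext c g d g' a b
  simp only [TensorProduct.AlgebraTensorModule.curry_apply, TensorProduct.curry_apply,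
    LinearMap.coe_restrictScalars, LinearMap.comp_apply, LinearEquiv.coe_coe,
    TensorProduct.map_tmul, TensorProduct.tensorTensorTensorComm_tmul, TensorProduct.lid_tmul,
    TensorProduct.rid_tmul, LinearMap.id_coe, id_eq, epsAl, m2, TensorProduct.assoc_tmul,
    TensorProduct.assoc_symm_tmul, LinearMap.mul'_apply, Bialgebra.counit_mul]
  simp [TensorProduct.smul_tmul', TensorProduct.tmul_smul, smul_smul, mul_comm, mul_left_comm,
    mul_assoc]

lemma A1right :
    (TensorProduct.rid k (C ⊗[k] H)).toLinearMap
      ∘ₗ TensorProduct.map LinearMap.id (epsAl k H C)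
      ∘ₗ TensorProduct.map (m2 k H C) (m2 k H C)
      ∘ₗ (TensorProduct.tensorTensorTensorComm k (C ⊗[k] H) (C ⊗[k] H) H H).toLinearMap
    = m2 k H C ∘ₗ TensorProduct.map
        ((TensorProduct.rid k (C ⊗[k] H)).toLinearMap
          ∘ₗ TensorProduct.map LinearMap.id (epsAl k H C))
        ((TensorProduct.rid k H).toLinearMap
          ∘ₗ TensorProduct.map LinearMap.id Coalgebra.counit) := by
  ext c g d g' a b
  simp only [TensorProduct.AlgebraTensorModule.curry_apply, TensorProduct.curry_apply,
    LinearMap.coe_restrictScalars, LinearMap.comp_apply, LinearEquiv.coe_coe,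
    TensorProduct.map_tmul, TensorProduct.tensorTensorTensorComm_tmul, TensorProduct.lid_tmul,
    TensorProduct.rid_tmul, LinearMap.id_coe, id_eq, epsAl, m2, TensorProduct.assoc_tmul,
    TensorProduct.assoc_symm_tmul, LinearMap.mul'_apply, Bialgebra.counit_mul]
  simp [TensorProduct.smul_tmul', TensorProduct.tmul_smul, smul_smul, mul_comm, mul_left_comm,
    mul_assoc]

lemma B0left :
    (TensorProduct.lid k (C ⊗[k] H)).toLinearMap
      ∘ₗ TensorProduct.map (epsAl k H C) LinearMap.id
      ∘ₗ (TensorProduct.assoc k C H (C ⊗[k] H)).symm.toLinearMap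
    = (TensorProduct.lid k (C ⊗[k] H)).toLinearMap
      ∘ₗ TensorProduct.map Coalgebra.counit
          ((TensorProduct.lid k (C ⊗[k] H)).toLinearMap
            ∘ₗ TensorProduct.map Coalgebra.counit LinearMap.id) := by
  ext c g d b
  simp only [TensorProduct.AlgebraTensorModule.curry_apply, TensorProduct.curry_apply,
    LinearMap.coe_restrictScalars, LinearMap.comp_apply, LinearEquiv.coe_coe,
    TensorProduct.map_tmul, TensorProduct.lid_tmul, LinearMap.id_coe, id_eq, epsAl,
    TensorProduct.assoc_symm_tmul, Bialgebra.counit_mul]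
  simp [TensorProduct.smul_tmul', TensorProduct.tmul_smul, smul_smul, mul_comm, mul_left_comm,
    mul_assoc]

lemma B0right :
    (TensorProduct.rid k (C ⊗[k] H)).toLinearMap
      ∘ₗ TensorProduct.map LinearMap.id (epsAl k H C)
      ∘ₗ (TensorProduct.assoc k C H (C ⊗[k] H)).symm.toLinearMap
    = TensorProduct.map LinearMap.id
        ((TensorProduct.rid k H).toLinearMap
          ∘ₗ TensorProduct.map LinearMap.id (epsAl k H C)) := by
  ext c g d b
  simp only [TensorProduct.AlgebraTensorModule.curry_apply, TensorProduct.curry_apply,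
    LinearMap.coe_restrictScalars, LinearMap.comp_apply, LinearEquiv.coe_coe,
    TensorProduct.map_tmul, TensorProduct.lid_tmul, TensorProduct.rid_tmul, LinearMap.id_coe,
    id_eq, epsAl, TensorProduct.assoc_symm_tmul, Bialgebra.counit_mul]
  simp [TensorProduct.smul_tmul', TensorProduct.tmul_smul, smul_smul, mul_comm, mul_left_comm,
    mul_assoc]

lemma key1left :
    ((TensorProduct.lid k (C ⊗[k] H)).toLinearMap
      ∘ₗ TensorProduct.map Coalgebra.counit LinearMap.id)
      ∘ₗ TensorProduct.map (LinearMap.mul' k H) LinearMap.id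
      ∘ₗ (TensorProduct.tensorTensorTensorComm k H C H H).toLinearMap
    = TensorProduct.map
        ((TensorProduct.lid k C).toLinearMap
          ∘ₗ TensorProduct.map Coalgebra.counit LinearMap.id)
        ((TensorProduct.lid k H).toLinearMap
          ∘ₗ TensorProduct.map Coalgebra.counit LinearMap.id) := by
  ext g x a b
  simp only [TensorProduct.AlgebraTensorModule.curry_apply, TensorProduct.curry_apply,
    LinearMap.coe_restrictScalars, LinearMap.comp_apply, LinearEquiv.coe_coe,
    TensorProduct.map_tmul, TensorProduct.tensorTensorTensorComm_tmul, TensorProduct.lid_tmul,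
    LinearMap.id_coe, id_eq, LinearMap.mul'_apply, Bialgebra.counit_mul]
  simp [TensorProduct.smul_tmul', TensorProduct.tmul_smul, smul_smul, mul_comm, mul_left_comm,
    mul_assoc]

lemma key1right :
    ((TensorProduct.rid k H).toLinearMap
      ∘ₗ TensorProduct.map LinearMap.id (epsAl k H C))
      ∘ₗ TensorProduct.map (LinearMap.mul' k H) LinearMap.id
      ∘ₗ (TensorProduct.tensorTensorTensorComm k H C H H).toLinearMap
    = LinearMap.mul' k H ∘ₗ TensorProduct.map
        ((TensorProduct.rid k H).toLinearMap
          ∘ₗ TensorProduct.map LinearMap.id Coalgebra.counit)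
        ((TensorProduct.rid k H).toLinearMap
          ∘ₗ TensorProduct.map LinearMap.id Coalgebra.counit) := by
  ext g x a b
  simp only [TensorProduct.AlgebraTensorModule.curry_apply, TensorProduct.curry_apply,
    LinearMap.coe_restrictScalars, LinearMap.comp_apply, LinearEquiv.coe_coe,
    TensorProduct.map_tmul, TensorProduct.tensorTensorTensorComm_tmul, TensorProduct.lid_tmul,
    TensorProduct.rid_tmul, LinearMap.id_coe, id_eq, epsAl, LinearMap.mul'_apply,
    Bialgebra.counit_mul]
  rw [smul_mul_smul_comm, smul_eq_mul]

end Structural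


section Fuse

variable {M₁ M₂ N₁ N₂ N₃ : Type} [AddCommGroup M₁] [Module k M₁] [AddCommGroup M₂] [Module k M₂]
  [AddCommGroup N₁] [Module k N₁] [AddCommGroup N₂] [Module k N₂]
  [AddCommGroup N₃] [Module k N₃]

lemma map_fuse (f : M₁ →ₗ[k] M₂) (g : N₂ →ₗ[k] N₃) (g' : N₁ →ₗ[k] N₂)
    (z : M₁ ⊗[k] N₁) :
    TensorProduct.map f g (TensorProduct.map LinearMap.id g' z)
      = TensorProduct.map f (g ∘ₗ g') z := by
  rw [← LinearMap.comp_apply, ← TensorProduct.map_comp, LinearMap.comp_id]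

end Fuse

section Assembly

set_option maxRecDepth 8000

variable (ρ : C →ₗ[k] H ⊗[k] C) (α : C →ₗ[k] H ⊗[k] H)

lemma hPQleft (hρ : IsWeakCoaction k H C ρ) :
    ((TensorProduct.lid k (C ⊗[k] H)).toLinearMap
        ∘ₗ TensorProduct.map Coalgebra.counit LinearMap.id)
      ∘ₗ (TensorProduct.map (LinearMap.mul' k H) LinearMap.id
          ∘ₗ (TensorProduct.tensorTensorTensorComm k H C H H).toLinearMap
          ∘ₗ TensorProduct.map ρ α)
    = TensorProduct.map LinearMap.id
        (((TensorProduct.lid k H).toLinearMap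
          ∘ₗ TensorProduct.map Coalgebra.counit LinearMap.id) ∘ₗ α) := by
  have h1 := key1left k H C
  have h2 := hρ.2.2
  simp only [← LinearMap.comp_assoc] at h1 h2 ⊢
  rw [h1, ← TensorProduct.map_comp, h2]

lemma hPQright (hρ : IsWeakCoaction k H C ρ) :
    ((TensorProduct.rid k H).toLinearMap
        ∘ₗ TensorProduct.map LinearMap.id (epsAl k H C))
      ∘ₗ (TensorProduct.map (LinearMap.mul' k H) LinearMap.id
          ∘ₗ (TensorProduct.tensorTensorTensorComm k H C H H).toLinearMap
          ∘ₗ TensorProduct.map ρ α)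
    = LinearMap.mul' k H ∘ₗ TensorProduct.map (Algebra.linearMap k H ∘ₗ Coalgebra.counit)
        (((TensorProduct.rid k H).toLinearMap
          ∘ₗ TensorProduct.map LinearMap.id Coalgebra.counit) ∘ₗ α) := by
  have h1 := key1right k H C
  have h2 := hρ.2.1
  simp only [← LinearMap.comp_assoc] at h1 h2 ⊢
  rw [h1, LinearMap.comp_assoc, ← TensorProduct.map_comp, h2]

lemma conv_unit_left (v : C →ₗ[k] H) :
    (LinearMap.mul' k H ∘ₗ TensorProduct.map (Algebra.linearMap k H ∘ₗ Coalgebra.counit) v)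
      ∘ₗ Coalgebra.comul = v := by
  ext c
  simp only [LinearMap.comp_apply]
  have r := ℛ k c
  rw [← r.eq]
  simp only [map_sum, TensorProduct.map_tmul, LinearMap.comp_apply, LinearMap.mul'_apply,
    Algebra.linearMap_apply]
  rw [show ∑ i ∈ r.index, algebraMap k H (Coalgebra.counit (R := k) (r.left i)) * v (r.right i)
      = ∑ i ∈ r.index, Coalgebra.counit (R := k) (r.left i) • v (r.right i) by
    refine Finset.sum_congr rfl fun i _ => ?_
    rw [Algebra.smul_def]]
  rw [show ∑ i ∈ r.index, Coalgebra.counit (R := k) (r.left i) • v (r.right i)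
      = v (∑ i ∈ r.index, Coalgebra.counit (R := k) (r.left i) • r.right i) by
    simp [map_sum]]
  rw [aux_counit_smul_sum k C r]

lemma Bleft (hρ : IsWeakCoaction k H C ρ) :
    (TensorProduct.lid k (C ⊗[k] H)).toLinearMap
        ∘ₗ TensorProduct.map (epsAl k H C) LinearMap.id ∘ₗ psiMap k H C ρ α
    = TensorProduct.map LinearMap.id
        (((TensorProduct.lid k H).toLinearMap
          ∘ₗ TensorProduct.map Coalgebra.counit LinearMap.id) ∘ₗ α)
      ∘ₗ Coalgebra.comul := by
  have hPQ := hPQleft k H C ρ α hρ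
  have hB0 := LinearMap.congr_fun (B0left k H C)
  have hfin := LinearMap.congr_fun (aux_lid_counit_map k C (C ⊗[k] H)
    (TensorProduct.map LinearMap.id
        (((TensorProduct.lid k H).toLinearMap
          ∘ₗ TensorProduct.map Coalgebra.counit LinearMap.id) ∘ₗ α)
      ∘ₗ Coalgebra.comul))
  simp only [LinearMap.comp_apply, LinearEquiv.coe_coe] at hB0 hfin
  ext c
  simp only [LinearMap.comp_apply, psiMap, comul₂, LinearEquiv.coe_coe]
  rw [hB0, map_fuse, hPQ, map_fuse, hfin]

lemma Bright (hρ : IsWeakCoaction k H C ρ) :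
    (TensorProduct.rid k (C ⊗[k] H)).toLinearMap
        ∘ₗ TensorProduct.map LinearMap.id (epsAl k H C) ∘ₗ psiMap k H C ρ α
    = TensorProduct.map LinearMap.id
        (((TensorProduct.rid k H).toLinearMap
          ∘ₗ TensorProduct.map LinearMap.id Coalgebra.counit) ∘ₗ α)
      ∘ₗ Coalgebra.comul := by
  have hPQ := hPQright k H C ρ α hρ
  have hB0 := LinearMap.congr_fun (B0right k H C)
  have hconv := conv_unit_left k H C
    (((TensorProduct.rid k H).toLinearMap
      ∘ₗ TensorProduct.map LinearMap.id Coalgebra.counit) ∘ₗ α)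
  simp only [LinearMap.comp_apply, LinearEquiv.coe_coe] at hB0
  ext c
  simp only [LinearMap.comp_apply, psiMap, comul₂, LinearEquiv.coe_coe]
  rw [hB0, map_fuse, hPQ, map_fuse, hconv]

end Assembly


section Final

set_option maxRecDepth 8000

variable (ρ : C →ₗ[k] H ⊗[k] C) (α : C →ₗ[k] H ⊗[k] H)

lemma leftEq (hρ : IsWeakCoaction k H C ρ) :
    (TensorProduct.lid k (C ⊗[k] H)).toLinearMap
        ∘ₗ TensorProduct.map (epsAl k H C) LinearMap.id ∘ₗ DeltaAl k H C ρ α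
    = Phi k H C (((TensorProduct.lid k H).toLinearMap
        ∘ₗ TensorProduct.map Coalgebra.counit LinearMap.id) ∘ₗ α) := by
  have hA := LinearMap.congr_fun (A1left k H C)
  have hB := LinearMap.congr_fun (Bleft k H C ρ α hρ)
  have hh := LinearMap.congr_fun (aux_lid_counit_map k H H LinearMap.id)
  simp only [LinearMap.comp_apply, LinearEquiv.coe_coe, LinearMap.id_apply] at hA hB hh
  ext c h
  simp only [TensorProduct.AlgebraTensorModule.curry_apply, TensorProduct.curry_apply,
    LinearMap.coe_restrictScalars, LinearMap.comp_apply, LinearEquiv.coe_coe, DeltaAl,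
    TensorProduct.map_tmul, Phi, LinearMap.id_coe, id_eq]
  rw [hA]
  simp only [TensorProduct.map_tmul, LinearMap.comp_apply, LinearEquiv.coe_coe]
  rw [hB, hh]

lemma rightEq (hρ : IsWeakCoaction k H C ρ) :
    (TensorProduct.rid k (C ⊗[k] H)).toLinearMap
        ∘ₗ TensorProduct.map LinearMap.id (epsAl k H C) ∘ₗ DeltaAl k H C ρ α
    = Phi k H C (((TensorProduct.rid k H).toLinearMap
        ∘ₗ TensorProduct.map LinearMap.id Coalgebra.counit) ∘ₗ α) := by
  have hA := LinearMap.congr_fun (A1right k H C)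
  have hB := LinearMap.congr_fun (Bright k H C ρ α hρ)
  have hh := LinearMap.congr_fun (aux_rid_counit_map k H H LinearMap.id)
  simp only [LinearMap.comp_apply, LinearEquiv.coe_coe, LinearMap.id_apply] at hA hB hh
  ext c h
  simp only [TensorProduct.AlgebraTensorModule.curry_apply, TensorProduct.curry_apply,
    LinearMap.coe_restrictScalars, LinearMap.comp_apply, LinearEquiv.coe_coe, DeltaAl,
    TensorProduct.map_tmul, Phi, LinearMap.id_coe, id_eq]
  rw [hA]
  simp only [TensorProduct.map_tmul, LinearMap.comp_apply, LinearEquiv.coe_coe]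
  rw [hB, hh]

lemma Phi_unitH : Phi k H C (unitH k H C) = LinearMap.id := by
  ext c h
  simp only [TensorProduct.AlgebraTensorModule.curry_apply, TensorProduct.curry_apply,
    LinearMap.coe_restrictScalars, LinearMap.comp_apply, Phi, m2, TensorProduct.map_tmul,
    LinearMap.id_coe, id_eq, LinearEquiv.coe_coe]
  have h1 : (TensorProduct.map LinearMap.id (unitH k H C)) (Coalgebra.comul c)
      = c ⊗ₜ[k] (1 : H) := by
    have r := ℛ k c
    rw [← r.eq]
    simp only [map_sum, TensorProduct.map_tmul, LinearMap.id_coe, id_eq, unitH,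
      LinearMap.comp_apply, Algebra.linearMap_apply]
    calc ∑ i ∈ r.index, r.left i ⊗ₜ[k] algebraMap k H (Coalgebra.counit (R := k) (r.right i))
        = ∑ i ∈ r.index, (Coalgebra.counit (R := k) (r.right i) • r.left i) ⊗ₜ[k] (1 : H) := by
          refine Finset.sum_congr rfl fun i _ => ?_
          rw [Algebra.algebraMap_eq_smul_one, TensorProduct.tmul_smul,
            TensorProduct.smul_tmul']
      _ = (∑ i ∈ r.index, Coalgebra.counit (R := k) (r.right i) • r.left i) ⊗ₜ[k] (1 : H) := by
          rw [TensorProduct.sum_tmul]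
      _ = c ⊗ₜ[k] (1 : H) := by rw [aux_smul_counit_sum k C r]
  rw [h1]
  simp

lemma Phi_inj (w : C →ₗ[k] H) (hw : Phi k H C w = LinearMap.id) : w = unitH k H C := by
  ext c
  have h1 := LinearMap.congr_fun hw (c ⊗ₜ[k] (1 : H))
  simp only [Phi, m2, LinearMap.comp_apply, TensorProduct.map_tmul, LinearMap.id_coe, id_eq,
    LinearEquiv.coe_coe, LinearMap.id_apply] at h1
  have h2 : ∀ z : C ⊗[k] H, (TensorProduct.map LinearMap.id (LinearMap.mul' k H))
      ((TensorProduct.assoc k C H H) (z ⊗ₜ[k] (1 : H))) = z := by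
    intro z
    induction z using TensorProduct.induction_on with
    | zero => simp
    | tmul x y => simp
    | add x y hx hy => simp [TensorProduct.add_tmul, hx, hy]
  rw [h2] at h1
  have h3 := congrArg ((TensorProduct.lid k H).toLinearMap
      ∘ₗ TensorProduct.map (Coalgebra.counit (R := k) (A := C)) LinearMap.id) h1
  simp only [LinearMap.comp_apply, LinearEquiv.coe_coe] at h3
  have r := ℛ k c
  rw [← r.eq] at h3
  simp only [map_sum, TensorProduct.map_tmul, LinearMap.id_coe, id_eq,
    TensorProduct.lid_tmul] at h3
  rw [show (∑ i ∈ r.index, Coalgebra.counit (R := k) (r.left i) • w (r.right i))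
      = w (∑ i ∈ r.index, Coalgebra.counit (R := k) (r.left i) • r.right i) by
    simp [map_sum]] at h3
  rw [aux_counit_smul_sum k C r] at h3
  rw [h3]
  simp [unitH, Algebra.algebraMap_eq_smul_one]

end Final

end TwistPaper

/-- `ε_α(c ⊗ h) = ε(c)ε(h)` is a counit for `Δ_α` iff
`(ε_H ⊗ id)α(c) = (id ⊗ ε_H)α(c) = ε(c)1` for all `c`. -/
theorem TwistPaper.crossedCoproduct_counit_iff
    (ρ : C →ₗ[k] H ⊗[k] C) (hρ : IsWeakCoaction k H C ρ)
    (α : C →ₗ[k] H ⊗[k] H) :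
    (((TensorProduct.lid k (C ⊗[k] H)).toLinearMap
        ∘ₗ TensorProduct.map (epsAl k H C) LinearMap.id ∘ₗ DeltaAl k H C ρ α
      = LinearMap.id) ∧
     ((TensorProduct.rid k (C ⊗[k] H)).toLinearMap
        ∘ₗ TensorProduct.map LinearMap.id (epsAl k H C) ∘ₗ DeltaAl k H C ρ α
      = LinearMap.id))
    ↔ CocycleCounit k H C α := by

  constructor
  · rintro ⟨h1, h2⟩
    refine ⟨?_, ?_⟩
    · have := Phi_inj k H C _ ((leftEq k H C ρ α hρ).symm.trans h1)
      simpa [unitH, LinearMap.comp_assoc] using this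
    · have := Phi_inj k H C _ ((rightEq k H C ρ α hρ).symm.trans h2)
      simpa [unitH, LinearMap.comp_assoc] using this
  · rintro ⟨h1, h2⟩
    constructor
    · rw [leftEq k H C ρ α hρ]
      rw [show ((TensorProduct.lid k H).toLinearMap
          ∘ₗ TensorProduct.map Coalgebra.counit LinearMap.id) ∘ₗ α = unitH k H C by
        rw [LinearMap.comp_assoc, h1, unitH]]
      exact Phi_unitH k H C
    · rw [rightEq k H C ρ α hρ]
      rw [show ((TensorProduct.rid k H).toLinearMap
          ∘ₗ TensorProduct.map LinearMap.id Coalgebra.counit) ∘ₗ α = unitH k H C by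
        rw [LinearMap.comp_assoc, h2, unitH]]
      exact Phi_unitH k H C
end
end

section
/- Let ρ, ρ' be weak H-coactions on C with Harrison 2-cocycles α, α' respectively, and let u : C → H be convolution invertible with ρ'(c) = u^{-1}(c₁) c_{2[-1]} u(c₃) ⊗ c_{2[0]} and α'(c) = u^{-1}(c₁) c_{2[-1]} α₁(c₃) u(c₄)₁ ⊗ u^{-1}(c_{2[0]}) α₂(c₃) u(c₄)₂. Then φ : C ⋊'_{α'} H → C ⋊_α H defined by φ(c ⋊' h) = c₁ ⋊ u(c₂) h is a left C-colinear, right H-linear coalgebra isomorphism. -/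
open TensorProduct LinearMap Coalgebra

noncomputable section

variable (k : Type) [Field k]
variable (H : Type) [Ring H] [HopfAlgebra k H]
variable (C : Type) [AddCommGroup C] [Module k C] [Coalgebra k C]

namespace TwistPaper

/-- Iterated comultiplication `c ↦ c₁ ⊗ (c₂ ⊗ (c₃ ⊗ c₄))`. -/
def comul₃ : C →ₗ[k] C ⊗[k] (C ⊗[k] (C ⊗[k] C)) :=
  TensorProduct.map LinearMap.id
      (TensorProduct.map LinearMap.id Coalgebra.comul ∘ₗ Coalgebra.comul)
    ∘ₗ Coalgebra.comul

/-- Right-hand side of (18): `c ↦ u⁻¹(c₁)c₂₍₋₁₎u(c₃) ⊗ c₂₍₀₎`. -/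
def rhs18 (ρ : C →ₗ[k] H ⊗[k] C) (u uinv : C →ₗ[k] H) : C →ₗ[k] H ⊗[k] C :=
  TensorProduct.map (LinearMap.mul' k H) LinearMap.id
    ∘ₗ (TensorProduct.assoc k H H C).symm.toLinearMap
    ∘ₗ TensorProduct.map LinearMap.id (rAct k H C)
    ∘ₗ TensorProduct.map uinv (TensorProduct.map ρ u)
    ∘ₗ comul₂ k C

/-- Right-hand side of (19):
`c ↦ u⁻¹(c₁)c₂₍₋₁₎α₁(c₃)u(c₄)₁ ⊗ u⁻¹(c₂₍₀₎)α₂(c₃)u(c₄)₂`,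
expressed as a fourfold convolution-type product in the algebra `H ⊗ H`. -/
def rhs19 (ρ : C →ₗ[k] H ⊗[k] C) (α : C →ₗ[k] H ⊗[k] H) (u uinv : C →ₗ[k] H) :
    C →ₗ[k] H ⊗[k] H :=
  LinearMap.mul' k (H ⊗[k] H)
    ∘ₗ TensorProduct.map
        (((TensorProduct.mk k H H).flip 1) ∘ₗ uinv)
        (LinearMap.mul' k (H ⊗[k] H)
          ∘ₗ TensorProduct.map
              (TensorProduct.map LinearMap.id uinv ∘ₗ ρ)
              (LinearMap.mul' k (H ⊗[k] H)
                ∘ₗ TensorProduct.map α (Coalgebra.comul ∘ₗ u)))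
    ∘ₗ comul₃ k C

/-- `φ(c ⊗ h) = c₁ ⊗ u(c₂)h`. -/
def phiMap (u : C →ₗ[k] H) : C ⊗[k] H →ₗ[k] C ⊗[k] H :=
  TensorProduct.map LinearMap.id (LinearMap.mul' k H)
    ∘ₗ (TensorProduct.assoc k C H H).toLinearMap
    ∘ₗ TensorProduct.map (TensorProduct.map LinearMap.id u ∘ₗ Coalgebra.comul) LinearMap.id

/-- The left `C`-coaction `c ⊗ h ↦ c₁ ⊗ (c₂ ⊗ h)` on `C ⊗ H`. -/
def coactC : C ⊗[k] H →ₗ[k] C ⊗[k] (C ⊗[k] H) :=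
  (TensorProduct.assoc k C C H).toLinearMap
    ∘ₗ TensorProduct.map Coalgebra.comul LinearMap.id

end TwistPaper


namespace TwistPaper

set_option linter.unusedSectionVars false

section Aux

variable (k : Type) [Field k]
variable (H : Type) [Ring H] [HopfAlgebra k H]
variable (C : Type) [AddCommGroup C] [Module k C] [Coalgebra k C]

/-- The combined right action of `H ⊗ H` on `(C ⊗ H) ⊗ (C ⊗ H)`. -/
def actX : ((C ⊗[k] H) ⊗[k] (C ⊗[k] H)) ⊗[k] (H ⊗[k] H) →ₗ[k] (C ⊗[k] H) ⊗[k] (C ⊗[k] H) :=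
  TensorProduct.map (m2 k H C) (m2 k H C)
    ∘ₗ (TensorProduct.tensorTensorTensorComm k (C ⊗[k] H) (C ⊗[k] H) H H).toLinearMap

@[simp] lemma m2_tmul (c : C) (g h : H) : m2 k H C ((c ⊗ₜ g) ⊗ₜ h) = c ⊗ₜ (g*h) := rfl

@[simp] lemma actX_tmul (x y : C ⊗[k] H) (p q : H) :
    actX k H C ((x ⊗ₜ y) ⊗ₜ (p ⊗ₜ q)) = m2 k H C (x ⊗ₜ p) ⊗ₜ m2 k H C (y ⊗ₜ q) := rfl

lemma m2_one (x : C ⊗[k] H) : m2 k H C (x ⊗ₜ (1:H)) = x := by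
  induction x using TensorProduct.induction_on with
  | zero => simp
  | tmul c a => simp
  | add a b ha hb => simp [add_tmul, ha, hb]

lemma m2_assoc (x : C ⊗[k] H) (g h : H) :
    m2 k H C (m2 k H C (x ⊗ₜ g) ⊗ₜ h) = m2 k H C (x ⊗ₜ (g*h)) := by
  induction x using TensorProduct.induction_on with
  | zero => simp
  | tmul c a => simp [mul_assoc]
  | add a b ha hb => simp [add_tmul, ha, hb]

lemma actX_assoc (x : (C ⊗[k] H) ⊗[k] (C ⊗[k] H)) (p q : H ⊗[k] H) :
    actX k H C (actX k H C (x ⊗ₜ p) ⊗ₜ q) = actX k H C (x ⊗ₜ (p*q)) := by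
  induction x using TensorProduct.induction_on with
  | zero => simp
  | tmul a b =>
    induction p using TensorProduct.induction_on with
    | zero => simp
    | tmul p1 p2 =>
      induction q using TensorProduct.induction_on with
      | zero => simp
      | tmul q1 q2 => simp [Algebra.TensorProduct.tmul_mul_tmul, m2_assoc]
      | add s t hs ht => simp only [mul_add, tmul_add, map_add, hs, ht]
    | add s t hs ht => simp only [add_mul, tmul_add, add_tmul, map_add, hs, ht]
  | add s t hs ht => simp only [add_tmul, map_add, hs, ht]

lemma actX_one (x : (C ⊗[k] H) ⊗[k] (C ⊗[k] H)) :
    actX k H C (x ⊗ₜ (1 : H ⊗[k] H)) = x := by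
  rw [Algebra.TensorProduct.one_def]
  induction x using TensorProduct.induction_on with
  | zero => simp
  | tmul a b => simp [m2_one]
  | add s t hs ht => simp only [add_tmul, map_add, hs, ht]

lemma map_comp_left_apply {M N P Q R : Type} [AddCommGroup M] [Module k M] [AddCommGroup N]
    [Module k N] [AddCommGroup P] [Module k P] [AddCommGroup Q] [Module k Q]
    [AddCommGroup R] [Module k R]
    (A : M →ₗ[k] N) (B : P →ₗ[k] M) (g : Q →ₗ[k] R) (x : P ⊗[k] Q) :
    TensorProduct.map (A ∘ₗ B) g x = TensorProduct.map A g (B.rTensor Q x) := by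
  rw [← LinearMap.comp_apply, rTensor, ← TensorProduct.map_comp, LinearMap.comp_id]

lemma map_comp_right_apply {M N P Q R : Type} [AddCommGroup M] [Module k M] [AddCommGroup N]
    [Module k N] [AddCommGroup P] [Module k P] [AddCommGroup Q] [Module k Q]
    [AddCommGroup R] [Module k R]
    (f : M →ₗ[k] N) (A : P →ₗ[k] Q) (B : R →ₗ[k] P) (x : M ⊗[k] R) :
    TensorProduct.map f (A ∘ₗ B) x = TensorProduct.map f A (B.lTensor M x) := by
  rw [← LinearMap.comp_apply, lTensor, ← TensorProduct.map_comp, LinearMap.comp_id]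

/-- `ω_v(c) = c₁ ⊗ v(c₂)`. -/
def omega (v : C →ₗ[k] H) : C →ₗ[k] C ⊗[k] H :=
  TensorProduct.map LinearMap.id v ∘ₗ Coalgebra.comul

/-- `c ↦ c ⊗ 1`. -/
def j1 : C →ₗ[k] C ⊗[k] H := (TensorProduct.mk k C H).flip 1

@[simp] lemma j1_apply (c : C) : j1 k H C c = c ⊗ₜ 1 := rfl

lemma phiMap_eq (u : C →ₗ[k] H) :
    phiMap k H C u = m2 k H C ∘ₗ TensorProduct.map (omega k H C u) LinearMap.id := by
  simp only [phiMap, m2, omega, LinearMap.comp_assoc]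

@[simp] lemma phiMap_tmul (u : C →ₗ[k] H) (c : C) (x : H) :
    phiMap k H C u (c ⊗ₜ x) = m2 k H C (omega k H C u c ⊗ₜ x) := by
  rw [phiMap_eq]; rfl

lemma DeltaAl_tmul (ρ : C →ₗ[k] H ⊗[k] C) (α : C →ₗ[k] H ⊗[k] H) (c : C) (x : H) :
    DeltaAl k H C ρ α (c ⊗ₜ x)
      = actX k H C (psiMap k H C ρ α c ⊗ₜ Coalgebra.comul x) := rfl

end Aux


section Aux2

variable (k : Type) [Field k]
variable (H : Type) [Ring H] [HopfAlgebra k H]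
variable (C : Type) [AddCommGroup C] [Module k C] [Coalgebra k C]

/-- Convolution product on `Hom(C, H ⊗ H)`. -/
def conv2 (f g : C →ₗ[k] H ⊗[k] H) : C →ₗ[k] H ⊗[k] H :=
  LinearMap.mul' k (H ⊗[k] H) ∘ₗ TensorProduct.map f g ∘ₗ Coalgebra.comul

/-- Right convolution action of `Hom(C, H ⊗ H)` on `Hom(C, (C⊗H)⊗(C⊗H))`. -/
def rmod (F : C →ₗ[k] (C ⊗[k] H) ⊗[k] (C ⊗[k] H)) (f : C →ₗ[k] H ⊗[k] H) :
    C →ₗ[k] (C ⊗[k] H) ⊗[k] (C ⊗[k] H) :=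
  actX k H C ∘ₗ TensorProduct.map F f ∘ₗ Coalgebra.comul

lemma rmod_rmod (F : C →ₗ[k] (C ⊗[k] H) ⊗[k] (C ⊗[k] H)) (f g : C →ₗ[k] H ⊗[k] H) :
    rmod k H C (rmod k H C F f) g = rmod k H C F (conv2 k H C f g) := by
  have GEN : (actX k H C ∘ₗ TensorProduct.map (actX k H C ∘ₗ TensorProduct.map F f) g
        ∘ₗ (TensorProduct.assoc k C C C).symm.toLinearMap)
      = actX k H C ∘ₗ TensorProduct.map F
          (LinearMap.mul' k (H ⊗[k] H) ∘ₗ TensorProduct.map f g) := by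
    ext c d e
    simp [actX_assoc]
  apply LinearMap.ext; intro c
  simp only [rmod, conv2, LinearMap.comp_apply, ← LinearMap.comp_assoc]
  rw [map_comp_left_apply, ← coassoc_symm_apply, map_comp_right_apply]
  have := LinearMap.congr_fun GEN (Coalgebra.comul.lTensor C (Coalgebra.comul c))
  simpa only [LinearMap.comp_apply, LinearEquiv.coe_coe] using this

/-- The unit of `conv2`. -/
def unit2 : C →ₗ[k] H ⊗[k] H :=
  Algebra.linearMap k (H ⊗[k] H) ∘ₗ Coalgebra.counit

lemma rmod_one (F : C →ₗ[k] (C ⊗[k] H) ⊗[k] (C ⊗[k] H)) :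
    rmod k H C F (unit2 k H C) = F := by
  apply LinearMap.ext; intro c
  simp only [rmod, unit2, LinearMap.comp_apply]
  rw [map_comp_right_apply, lTensor_counit_comul]
  simpa [Algebra.TensorProduct.one_def] using actX_one k H C (F c)

/-- Part 3: right `H`-linearity of `φ`. -/
lemma phi_hlinear (u : C →ₗ[k] H) :
    phiMap k H C u ∘ₗ m2 k H C
      = m2 k H C ∘ₗ TensorProduct.map (phiMap k H C u) LinearMap.id := by
  ext c g h
  simp [m2_assoc]

lemma phiphi_act (u : C →ₗ[k] H) :
    TensorProduct.map (phiMap k H C u) (phiMap k H C u) ∘ₗ actX k H C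
      = actX k H C ∘ₗ
        (TensorProduct.map (phiMap k H C u) (phiMap k H C u)).rTensor (H ⊗[k] H) := by
  have hpt : ∀ (x : C ⊗[k] H) (p : H), phiMap k H C u (m2 k H C (x ⊗ₜ p))
      = m2 k H C (phiMap k H C u x ⊗ₜ p) := by
    intro x p
    simpa using LinearMap.congr_fun (phi_hlinear k H C u) (x ⊗ₜ p)
  ext x y p q
  simp [hpt, m2_assoc]

lemma phiphi_rmod (u : C →ₗ[k] H)
    (F : C →ₗ[k] (C ⊗[k] H) ⊗[k] (C ⊗[k] H)) (f : C →ₗ[k] H ⊗[k] H) :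
    TensorProduct.map (phiMap k H C u) (phiMap k H C u) ∘ₗ rmod k H C F f
      = rmod k H C (TensorProduct.map (phiMap k H C u) (phiMap k H C u) ∘ₗ F) f := by
  apply LinearMap.ext; intro c
  simp only [rmod, LinearMap.comp_apply]
  rw [← LinearMap.comp_apply (TensorProduct.map _ _), phiphi_act,
    LinearMap.comp_apply, map_comp_left_apply]
  simp only [rTensor, ← LinearMap.comp_apply, ← LinearMap.comp_assoc,
    ← TensorProduct.map_comp, LinearMap.id_comp, LinearMap.comp_id]

/-- `φ_u ∘ ω_v = ω_{u ⋆ v}`. -/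
lemma phi_omega (u v : C →ₗ[k] H) :
    phiMap k H C u ∘ₗ omega k H C v = omega k H C (convH k H C u v) := by
  have GEN : m2 k H C ∘ₗ TensorProduct.map (TensorProduct.map LinearMap.id u) v
        ∘ₗ (TensorProduct.assoc k C C C).symm.toLinearMap
      = TensorProduct.map LinearMap.id (LinearMap.mul' k H ∘ₗ TensorProduct.map u v) := by
    ext c d e
    simp
  apply LinearMap.ext; intro c
  rw [LinearMap.comp_apply, phiMap_eq, LinearMap.comp_apply]
  simp only [omega, convH, LinearMap.comp_apply]
  rw [show (TensorProduct.map (TensorProduct.map LinearMap.id u ∘ₗ Coalgebra.comul)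
        (LinearMap.id : H →ₗ[k] H))
        ((TensorProduct.map LinearMap.id v) (Coalgebra.comul c))
      = (TensorProduct.map (TensorProduct.map LinearMap.id u ∘ₗ Coalgebra.comul) v)
        (Coalgebra.comul c) by
    simp only [← LinearMap.comp_apply, ← LinearMap.comp_assoc, ← TensorProduct.map_comp,
      LinearMap.comp_id, LinearMap.id_comp]]
  rw [map_comp_left_apply, ← coassoc_symm_apply]
  rw [show (TensorProduct.map (LinearMap.id : C →ₗ[k] C)
        (LinearMap.mul' k H ∘ₗ TensorProduct.map u v ∘ₗ Coalgebra.comul)) (Coalgebra.comul c)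
      = (TensorProduct.map LinearMap.id (LinearMap.mul' k H ∘ₗ TensorProduct.map u v))
          (Coalgebra.comul.lTensor C (Coalgebra.comul c)) by
    rw [← LinearMap.comp_assoc, map_comp_right_apply]]
  have := LinearMap.congr_fun GEN (Coalgebra.comul.lTensor C (Coalgebra.comul c))
  simpa only [LinearMap.comp_apply, LinearEquiv.coe_coe] using this

/-- `ω` of the convolution unit is `j1`. -/
lemma omega_unitH : omega k H C (unitH k H C) = j1 k H C := by
  apply LinearMap.ext; intro c
  simp only [omega, unitH, LinearMap.comp_apply, j1_apply]
  rw [show (TensorProduct.map (LinearMap.id : C →ₗ[k] C)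
        (Algebra.linearMap k H ∘ₗ Coalgebra.counit)) (Coalgebra.comul c)
      = (TensorProduct.map LinearMap.id (Algebra.linearMap k H))
          (Coalgebra.counit.lTensor C (Coalgebra.comul c)) from
    map_comp_right_apply k _ _ _ _]
  rw [lTensor_counit_comul]
  simp

end Aux2


section Aux3

variable (k : Type) [Field k]
variable (H : Type) [Ring H] [HopfAlgebra k H]
variable (C : Type) [AddCommGroup C] [Module k C] [Coalgebra k C]

/-- `γ_ρ(c) = (c₁ ⊗ c₂₍₋₁₎) ⊗ (c₂₍₀₎ ⊗ 1)`. -/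
def gammaM (ρ : C →ₗ[k] H ⊗[k] C) : C →ₗ[k] (C ⊗[k] H) ⊗[k] (C ⊗[k] H) :=
  (TensorProduct.assoc k C H (C ⊗[k] H)).symm.toLinearMap
    ∘ₗ TensorProduct.map LinearMap.id (TensorProduct.map LinearMap.id (j1 k H C) ∘ₗ ρ)
    ∘ₗ Coalgebra.comul

/-- `δ(c) = (c₁ ⊗ c₂₍₋₁₎) ⊗ (c₂₍₀₎₁ ⊗ u(c₂₍₀₎₂))`. -/
def deltaM (ρ : C →ₗ[k] H ⊗[k] C) (u : C →ₗ[k] H) :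
    C →ₗ[k] (C ⊗[k] H) ⊗[k] (C ⊗[k] H) :=
  (TensorProduct.assoc k C H (C ⊗[k] H)).symm.toLinearMap
    ∘ₗ TensorProduct.map LinearMap.id
        (TensorProduct.map LinearMap.id (omega k H C u) ∘ₗ ρ)
    ∘ₗ Coalgebra.comul

/-- `ψ = γ ◁ α`. -/
lemma psiMap_eq_rmod (ρ : C →ₗ[k] H ⊗[k] C) (α : C →ₗ[k] H ⊗[k] H) :
    psiMap k H C ρ α = rmod k H C (gammaM k H C ρ) α := by
  have GEN : (TensorProduct.assoc k C H (C ⊗[k] H)).symm.toLinearMap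
        ∘ₗ TensorProduct.map LinearMap.id
            (TensorProduct.map (LinearMap.mul' k H) LinearMap.id
              ∘ₗ (TensorProduct.tensorTensorTensorComm k H C H H).toLinearMap
              ∘ₗ TensorProduct.map ρ α)
      = actX k H C
        ∘ₗ TensorProduct.map
            ((TensorProduct.assoc k C H (C ⊗[k] H)).symm.toLinearMap
              ∘ₗ TensorProduct.map LinearMap.id
                  (TensorProduct.map LinearMap.id (j1 k H C) ∘ₗ ρ)) α
        ∘ₗ (TensorProduct.assoc k C C C).symm.toLinearMap := by
    ext c d e
    simp only [TensorProduct.AlgebraTensorModule.curry_apply, TensorProduct.curry_apply,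
      LinearMap.coe_restrictScalars, LinearMap.comp_apply, LinearEquiv.coe_coe,
      TensorProduct.map_tmul, TensorProduct.assoc_symm_tmul, LinearMap.id_apply]
    generalize ρ d = x
    generalize α e = y
    induction x using TensorProduct.induction_on with
    | zero => simp
    | tmul h d0 =>
      induction y using TensorProduct.induction_on with
      | zero => simp
      | tmul a b => simp [m2]
      | add s t hs ht => simp only [tmul_add, map_add, hs, ht]
    | add s t hs ht => simp only [add_tmul, tmul_add, map_add, hs, ht]
  apply LinearMap.ext; intro c
  simp only [psiMap, rmod, gammaM, comul₂, LinearMap.comp_apply, ← LinearMap.comp_assoc]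
  rw [map_comp_left_apply, ← coassoc_symm_apply]
  have := LinearMap.congr_fun GEN (Coalgebra.comul.lTensor C (Coalgebra.comul c))
  simpa only [LinearMap.comp_apply, LinearMap.lTensor, LinearEquiv.coe_coe, LinearMap.comp_assoc] using this

/-- `Δ_α` is compatible with the right `H`-action. -/
lemma DeltaAl_m2 (ρ : C →ₗ[k] H ⊗[k] C) (α : C →ₗ[k] H ⊗[k] H) :
    DeltaAl k H C ρ α ∘ₗ m2 k H C
      = actX k H C ∘ₗ TensorProduct.map (DeltaAl k H C ρ α) Coalgebra.comul := by
  ext c g h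
  simp [DeltaAl_tmul, actX_assoc]

lemma jflip_convH (u v : C →ₗ[k] H) :
    conv2 k H C (((TensorProduct.mk k H H).flip 1) ∘ₗ u) (((TensorProduct.mk k H H).flip 1) ∘ₗ v)
      = ((TensorProduct.mk k H H).flip 1) ∘ₗ convH k H C u v := by
  have GEN : LinearMap.mul' k (H ⊗[k] H)
        ∘ₗ TensorProduct.map ((TensorProduct.mk k H H).flip 1) ((TensorProduct.mk k H H).flip 1)
      = ((TensorProduct.mk k H H).flip 1) ∘ₗ LinearMap.mul' k H := by
    ext a b
    simp [Algebra.TensorProduct.tmul_mul_tmul]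
  simp only [conv2, convH]
  rw [show TensorProduct.map (((TensorProduct.mk k H H).flip 1) ∘ₗ u)
        (((TensorProduct.mk k H H).flip 1) ∘ₗ v)
      = TensorProduct.map ((TensorProduct.mk k H H).flip 1) ((TensorProduct.mk k H H).flip 1)
          ∘ₗ TensorProduct.map u v from TensorProduct.map_comp _ _ _ _]
  simp only [← LinearMap.comp_assoc, GEN]

lemma jflip_unitH :
    ((TensorProduct.mk k H H).flip 1) ∘ₗ unitH k H C = unit2 k H C := by
  apply LinearMap.ext; intro c
  simp [unitH, unit2, Algebra.TensorProduct.algebraMap_apply]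

lemma m2_j1_id : m2 k H C ∘ₗ TensorProduct.map (j1 k H C) LinearMap.id = LinearMap.id := by
  ext c h
  simp

lemma phi_phi (u v : C →ₗ[k] H) :
    phiMap k H C u ∘ₗ phiMap k H C v
      = m2 k H C ∘ₗ TensorProduct.map (omega k H C (convH k H C u v)) LinearMap.id := by
  rw [phiMap_eq k H C v, ← LinearMap.comp_assoc, phi_hlinear, LinearMap.comp_assoc]
  rw [show TensorProduct.map (phiMap k H C u) (LinearMap.id : H →ₗ[k] H)
        ∘ₗ TensorProduct.map (omega k H C v) LinearMap.id
      = TensorProduct.map (phiMap k H C u ∘ₗ omega k H C v) (LinearMap.id ∘ₗ LinearMap.id) from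
    (TensorProduct.map_comp _ _ _ _).symm]
  rw [phi_omega, LinearMap.comp_id]

/-- Part 2: left `C`-colinearity of `φ`. -/
lemma phi_colinear (u : C →ₗ[k] H) :
    TensorProduct.map LinearMap.id (phiMap k H C u) ∘ₗ coactC k H C
      = coactC k H C ∘ₗ phiMap k H C u := by
  set NL : (C ⊗[k] (C ⊗[k] C)) ⊗[k] H →ₗ[k] C ⊗[k] (C ⊗[k] H) :=
    TensorProduct.map LinearMap.id
        (m2 k H C ∘ₗ TensorProduct.map (TensorProduct.map LinearMap.id u) LinearMap.id)
      ∘ₗ (TensorProduct.assoc k C (C ⊗[k] C) H).toLinearMap with hNL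
  set NR : ((C ⊗[k] C) ⊗[k] C) ⊗[k] H →ₗ[k] C ⊗[k] (C ⊗[k] H) :=
    (TensorProduct.assoc k C C H).toLinearMap
      ∘ₗ TensorProduct.map LinearMap.id (LinearMap.mul' k H ∘ₗ TensorProduct.map u LinearMap.id)
      ∘ₗ (TensorProduct.assoc k (C ⊗[k] C) C H).toLinearMap with hNR
  have CA : TensorProduct.map LinearMap.id (phiMap k H C u)
        ∘ₗ (TensorProduct.assoc k C C H).toLinearMap
      = NL ∘ₗ (Coalgebra.comul.lTensor C).rTensor H := by
    ext a b h
    simp [hNL, omega]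
  have CB : coactC k H C ∘ₗ m2 k H C
        ∘ₗ (TensorProduct.map LinearMap.id u).rTensor H
      = NR ∘ₗ (Coalgebra.comul.rTensor C).rTensor H := by
    ext a b h
    simp [hNR, coactC]
  have CC : NL = NR ∘ₗ ((TensorProduct.assoc k C C C).symm.toLinearMap).rTensor H := by
    ext a b c'
    simp [hNL, hNR]
  ext c h
  have l1 := LinearMap.congr_fun CA ((Coalgebra.comul c) ⊗ₜ h)
  have l2 := LinearMap.congr_fun CB ((Coalgebra.comul c) ⊗ₜ h)
  have l3 := LinearMap.congr_fun CC ((Coalgebra.comul.lTensor C (Coalgebra.comul c)) ⊗ₜ h)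
  simp only [LinearMap.comp_apply, LinearMap.rTensor_tmul] at l1 l2 l3
  calc (TensorProduct.map LinearMap.id (phiMap k H C u)) (coactC k H C (c ⊗ₜ h))
      = (TensorProduct.map LinearMap.id (phiMap k H C u))
          ((TensorProduct.assoc k C C H) ((Coalgebra.comul c) ⊗ₜ h)) := by
        simp [coactC]
    _ = NL ((Coalgebra.comul.lTensor C (Coalgebra.comul c)) ⊗ₜ h) := l1
    _ = NR (((TensorProduct.assoc k C C C).symm
          (Coalgebra.comul.lTensor C (Coalgebra.comul c))) ⊗ₜ h) := l3
    _ = NR ((Coalgebra.comul.rTensor C (Coalgebra.comul c)) ⊗ₜ h) := by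
        rw [coassoc_symm_apply]
    _ = coactC k H C (m2 k H C (((TensorProduct.map LinearMap.id u) (Coalgebra.comul c)) ⊗ₜ h)) :=
        l2.symm
    _ = coactC k H C (phiMap k H C u (c ⊗ₜ h)) := by
        simp [omega]

end Aux3


section Aux4

variable (k : Type) [Field k]
variable (H : Type) [Ring H] [HopfAlgebra k H]
variable (C : Type) [AddCommGroup C] [Module k C] [Coalgebra k C]

/-- Convolution product on `Hom(C, k)`. -/
def convK (f g : C →ₗ[k] k) : C →ₗ[k] k :=
  LinearMap.mul' k k ∘ₗ TensorProduct.map f g ∘ₗ Coalgebra.comul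

/-- `(ε ⊗ ε)`-collapse on `H ⊗ H`. -/
def E2 : H ⊗[k] H →ₗ[k] k :=
  LinearMap.mul' k k ∘ₗ TensorProduct.map Coalgebra.counit Coalgebra.counit

lemma counit_comp_mul' :
    (Coalgebra.counit : H →ₗ[k] k) ∘ₗ LinearMap.mul' k H
      = LinearMap.mul' k k ∘ₗ TensorProduct.map Coalgebra.counit Coalgebra.counit := by
  ext a b
  simp

lemma counit_comp_alg :
    (Coalgebra.counit : H →ₗ[k] k) ∘ₗ Algebra.linearMap k H = LinearMap.id := by
  apply LinearMap.ext; intro r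
  simp [Algebra.algebraMap_eq_smul_one]

lemma counit_comp_convH (u v : C →ₗ[k] H) :
    Coalgebra.counit ∘ₗ convH k H C u v
      = convK k C (Coalgebra.counit ∘ₗ u) (Coalgebra.counit ∘ₗ v) := by
  simp only [convH, convK, ← LinearMap.comp_assoc, counit_comp_mul' k H]
  rw [LinearMap.comp_assoc _ _ (LinearMap.mul' k k), LinearMap.comp_assoc _ _ (LinearMap.mul' k k)]
  rw [show TensorProduct.map (Coalgebra.counit : H →ₗ[k] k) Coalgebra.counit
        ∘ₗ TensorProduct.map u v
      = TensorProduct.map (Coalgebra.counit ∘ₗ u) (Coalgebra.counit ∘ₗ v) from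
    (TensorProduct.map_comp _ _ _ _).symm]
  simp only [LinearMap.comp_assoc]

lemma counit_comp_unitH :
    Coalgebra.counit ∘ₗ unitH k H C = (Coalgebra.counit : C →ₗ[k] k) := by
  simp only [unitH, ← LinearMap.comp_assoc, counit_comp_alg k H, LinearMap.id_comp]

lemma convK_counit_right (f : C →ₗ[k] k) : convK k C f Coalgebra.counit = f := by
  apply LinearMap.ext; intro c
  simp only [convK, LinearMap.comp_apply]
  rw [show TensorProduct.map f (Coalgebra.counit : C →ₗ[k] k)
      = f.rTensor k ∘ₗ Coalgebra.counit.lTensor C by ext a b; simp]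
  rw [LinearMap.comp_apply, lTensor_counit_comul]
  simp

lemma convK_counit_left (f : C →ₗ[k] k) : convK k C Coalgebra.counit f = f := by
  apply LinearMap.ext; intro c
  simp only [convK, LinearMap.comp_apply]
  rw [show TensorProduct.map (Coalgebra.counit : C →ₗ[k] k) f
      = f.lTensor k ∘ₗ Coalgebra.counit.rTensor C by ext a b; simp]
  rw [LinearMap.comp_apply, rTensor_counit_comul]
  simp

lemma E2_comp_mul' :
    E2 k H ∘ₗ LinearMap.mul' k (H ⊗[k] H)
      = LinearMap.mul' k k ∘ₗ TensorProduct.map (E2 k H) (E2 k H) := by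
  ext a b c d
  simp [E2, mul_mul_mul_comm]

lemma E2_comp_conv2 (f g : C →ₗ[k] H ⊗[k] H) :
    E2 k H ∘ₗ conv2 k H C f g = convK k C (E2 k H ∘ₗ f) (E2 k H ∘ₗ g) := by
  simp only [conv2, convK, ← LinearMap.comp_assoc, E2_comp_mul' k H]
  rw [LinearMap.comp_assoc _ _ (LinearMap.mul' k k), LinearMap.comp_assoc _ _ (LinearMap.mul' k k)]
  rw [show TensorProduct.map (E2 k H) (E2 k H) ∘ₗ TensorProduct.map f g
      = TensorProduct.map (E2 k H ∘ₗ f) (E2 k H ∘ₗ g) from (TensorProduct.map_comp _ _ _ _).symm]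
  simp only [LinearMap.comp_assoc]

lemma E2_comp_jflip :
    E2 k H ∘ₗ (TensorProduct.mk k H H).flip 1 = (Coalgebra.counit : H →ₗ[k] k) := by
  apply LinearMap.ext; intro x
  simp [E2]

lemma E2_comp_comul :
    E2 k H ∘ₗ (Coalgebra.comul : H →ₗ[k] H ⊗[k] H) = Coalgebra.counit := by
  apply LinearMap.ext; intro x
  simp only [E2, LinearMap.comp_apply]
  rw [show TensorProduct.map (Coalgebra.counit : H →ₗ[k] k) Coalgebra.counit
      = (Coalgebra.counit : H →ₗ[k] k).lTensor k ∘ₗ Coalgebra.counit.rTensor H by ext a b; simp]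
  rw [LinearMap.comp_apply, rTensor_counit_comul]
  simp

lemma E2_comp_rho (ρ : C →ₗ[k] H ⊗[k] C) (v : C →ₗ[k] H)
    (h16 : (TensorProduct.lid k C).toLinearMap
        ∘ₗ TensorProduct.map Coalgebra.counit LinearMap.id ∘ₗ ρ = LinearMap.id) :
    E2 k H ∘ₗ TensorProduct.map LinearMap.id v ∘ₗ ρ = Coalgebra.counit ∘ₗ v := by
  have GEN : E2 k H ∘ₗ TensorProduct.map LinearMap.id v
      = (Coalgebra.counit ∘ₗ v) ∘ₗ (TensorProduct.lid k C).toLinearMap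
          ∘ₗ TensorProduct.map Coalgebra.counit LinearMap.id := by
    ext a c
    simp [E2]
  rw [← LinearMap.comp_assoc, GEN]
  simp only [LinearMap.comp_assoc, h16, LinearMap.comp_id]

lemma E2_comp_cocycle (α : C →ₗ[k] H ⊗[k] H)
    (hI : (TensorProduct.lid k H).toLinearMap
        ∘ₗ TensorProduct.map Coalgebra.counit LinearMap.id ∘ₗ α
      = Algebra.linearMap k H ∘ₗ Coalgebra.counit) :
    E2 k H ∘ₗ α = Coalgebra.counit := by
  have GEN : (Coalgebra.counit : H →ₗ[k] k) ∘ₗ (TensorProduct.lid k H).toLinearMap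
        ∘ₗ TensorProduct.map Coalgebra.counit LinearMap.id = E2 k H := by
    ext a b
    simp [E2]
  rw [← GEN]
  simp only [LinearMap.comp_assoc]
  rw [hI, ← LinearMap.comp_assoc, counit_comp_alg k H, LinearMap.id_comp]

lemma map_lsplit {M N P₁ P₂ Q₁ : Type} [AddCommGroup M] [Module k M] [AddCommGroup N]
    [Module k N] [AddCommGroup P₁] [Module k P₁] [AddCommGroup P₂] [Module k P₂]
    [AddCommGroup Q₁] [Module k Q₁]
    (f : M →ₗ[k] N) (P : P₁ →ₗ[k] P₂) (Q : Q₁ →ₗ[k] P₁) :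
    TensorProduct.map f (P ∘ₗ Q)
      = TensorProduct.map f P ∘ₗ TensorProduct.map LinearMap.id Q := by
  rw [← TensorProduct.map_comp, LinearMap.comp_id]

lemma rhs19_eq (ρ : C →ₗ[k] H ⊗[k] C) (α : C →ₗ[k] H ⊗[k] H) (u uinv : C →ₗ[k] H) :
    rhs19 k H C ρ α u uinv
      = conv2 k H C (((TensorProduct.mk k H H).flip 1) ∘ₗ uinv)
          (conv2 k H C (TensorProduct.map LinearMap.id uinv ∘ₗ ρ)
            (conv2 k H C α (Coalgebra.comul ∘ₗ u))) := by
  have sub : conv2 k H C (TensorProduct.map LinearMap.id uinv ∘ₗ ρ)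
        (conv2 k H C α (Coalgebra.comul ∘ₗ u))
      = (LinearMap.mul' k (H ⊗[k] H)
          ∘ₗ TensorProduct.map (TensorProduct.map LinearMap.id uinv ∘ₗ ρ)
              (LinearMap.mul' k (H ⊗[k] H)
                ∘ₗ TensorProduct.map α (Coalgebra.comul ∘ₗ u))) ∘ₗ comul₂ k C := by
    unfold conv2 comul₂
    rw [show TensorProduct.map (TensorProduct.map LinearMap.id uinv ∘ₗ ρ)
          (LinearMap.mul' k (H ⊗[k] H) ∘ₗ TensorProduct.map α (Coalgebra.comul ∘ₗ u)
            ∘ₗ Coalgebra.comul)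
        = TensorProduct.map (TensorProduct.map LinearMap.id uinv ∘ₗ ρ)
            ((LinearMap.mul' k (H ⊗[k] H) ∘ₗ TensorProduct.map α (Coalgebra.comul ∘ₗ u))
              ∘ₗ Coalgebra.comul) by rw [LinearMap.comp_assoc]]
    rw [map_lsplit]
    simp only [LinearMap.comp_assoc]
  rw [sub]
  unfold conv2
  rw [map_lsplit]
  unfold rhs19 comul₃ comul₂
  simp only [LinearMap.comp_assoc]

end Aux4


section Aux5

variable (k : Type) [Field k]
variable (H : Type) [Ring H] [HopfAlgebra k H]
variable (C : Type) [AddCommGroup C] [Module k C] [Coalgebra k C]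

lemma map_merge {A₁ A₂ A₃ B₁ B₂ B₃ : Type} [AddCommGroup A₁] [Module k A₁]
    [AddCommGroup A₂] [Module k A₂] [AddCommGroup A₃] [Module k A₃]
    [AddCommGroup B₁] [Module k B₁] [AddCommGroup B₂] [Module k B₂]
    [AddCommGroup B₃] [Module k B₃]
    (f : A₂ →ₗ[k] A₃) (g : A₁ →ₗ[k] A₂) (P : B₂ →ₗ[k] B₃) (Q : B₁ →ₗ[k] B₂)
    (x : A₁ ⊗[k] B₁) :
    TensorProduct.map f P (TensorProduct.map g Q x)
      = TensorProduct.map (f ∘ₗ g) (P ∘ₗ Q) x := by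
  rw [← LinearMap.comp_apply, ← TensorProduct.map_comp]

/-- key cancellation: `c ↦ c₁ ⊗ u(c₂)·u⁻¹(c₃)` equals `c ↦ c ⊗ 1`. -/
lemma key_cancel (u uinv : C →ₗ[k] H) (hu₁ : convH k H C u uinv = unitH k H C) :
    m2 k H C ∘ₗ TensorProduct.map (omega k H C u) uinv ∘ₗ Coalgebra.comul = j1 k H C := by
  have O1 : m2 k H C ∘ₗ TensorProduct.map (omega k H C u) uinv ∘ₗ Coalgebra.comul
      = phiMap k H C u ∘ₗ omega k H C uinv := by
    rw [phiMap_eq]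
    simp only [LinearMap.comp_assoc]
    congr 1
    rw [show omega k H C uinv
        = TensorProduct.map LinearMap.id uinv ∘ₗ Coalgebra.comul from rfl]
    rw [← LinearMap.comp_assoc]
    congr 1
    rw [← TensorProduct.map_comp, LinearMap.comp_id, LinearMap.id_comp]
  rw [O1, phi_omega, hu₁, omega_unitH]

/-- naturality helper for `J7`. -/
lemma nat_assoc4 :
    (TensorProduct.assoc k C C (C ⊗[k] C)).toLinearMap
        ∘ₗ TensorProduct.map LinearMap.id (Coalgebra.comul (R := k) (A := C))
        ∘ₗ (TensorProduct.assoc k C C C).symm.toLinearMap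
      = TensorProduct.map LinearMap.id (TensorProduct.map LinearMap.id Coalgebra.comul) := by
  ext c d e
  simp

/-- `c₁ ⊗ (c₂ ⊗ (c₃ ⊗ c₄))  =  assoc ((c₁ ⊗ c₂) ⊗ (c₃ ⊗ c₄))`. -/
lemma J7 (x : C) :
    TensorProduct.map LinearMap.id (comul₂ k C) (Coalgebra.comul x)
      = (TensorProduct.assoc k C C (C ⊗[k] C))
          (TensorProduct.map Coalgebra.comul Coalgebra.comul (Coalgebra.comul x)) := by
  have h1 : TensorProduct.map (Coalgebra.comul (R := k) (A := C)) Coalgebra.comul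
        (Coalgebra.comul x)
      = TensorProduct.map LinearMap.id Coalgebra.comul
          ((TensorProduct.assoc k C C C).symm
            (Coalgebra.comul.lTensor C (Coalgebra.comul x))) := by
    rw [coassoc_symm_apply]
    rw [show (Coalgebra.comul.rTensor C) (Coalgebra.comul x)
        = TensorProduct.map Coalgebra.comul LinearMap.id (Coalgebra.comul x) from rfl]
    rw [map_merge]
    simp
  rw [h1]
  have := LinearMap.congr_fun (nat_assoc4 k C) (Coalgebra.comul.lTensor C (Coalgebra.comul x))
  simp only [LinearMap.comp_apply, LinearEquiv.coe_coe] at this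
  rw [this]
  rw [show (Coalgebra.comul.lTensor C) (Coalgebra.comul x)
      = TensorProduct.map LinearMap.id Coalgebra.comul (Coalgebra.comul x) from rfl]
  rw [map_merge]
  simp only [LinearMap.id_comp, comul₂]

end Aux5


section Aux6

variable (k : Type) [Field k]
variable (H : Type) [Ring H] [HopfAlgebra k H]
variable (C : Type) [AddCommGroup C] [Module k C] [Coalgebra k C]

/-- CRUX: `δ ◁ (ρ₋ ⊗ u⁻¹(ρ₀)) = γ`. -/
lemma crux (ρ : C →ₗ[k] H ⊗[k] C) (u uinv : C →ₗ[k] H)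
    (hu₁ : convH k H C u uinv = unitH k H C)
    (h14 : TensorProduct.map LinearMap.id Coalgebra.comul ∘ₗ ρ
      = TensorProduct.map (LinearMap.mul' k H) LinearMap.id
          ∘ₗ (TensorProduct.tensorTensorTensorComm k H C H C).toLinearMap
          ∘ₗ TensorProduct.map ρ ρ ∘ₗ Coalgebra.comul) :
    rmod k H C (deltaM k H C ρ u) (TensorProduct.map LinearMap.id uinv ∘ₗ ρ)
      = gammaM k H C ρ := by
  set D : C ⊗[k] C →ₗ[k] (C ⊗[k] H) ⊗[k] (C ⊗[k] H) :=
    (TensorProduct.assoc k C H (C ⊗[k] H)).symm.toLinearMap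
      ∘ₗ TensorProduct.map LinearMap.id
          (TensorProduct.map LinearMap.id (omega k H C u) ∘ₗ ρ) with hD
  set R' : C ⊗[k] (H ⊗[k] (C ⊗[k] C)) →ₗ[k] (C ⊗[k] H) ⊗[k] (C ⊗[k] H) :=
    (TensorProduct.assoc k C H (C ⊗[k] H)).symm.toLinearMap
      ∘ₗ TensorProduct.map LinearMap.id
          (TensorProduct.map LinearMap.id
            (m2 k H C ∘ₗ TensorProduct.map (omega k H C u) uinv)) with hR'
  have GEN : actX k H C ∘ₗ TensorProduct.map D (TensorProduct.map LinearMap.id uinv ∘ₗ ρ)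
        ∘ₗ (TensorProduct.assoc k C C C).symm.toLinearMap
      = R' ∘ₗ TensorProduct.map LinearMap.id
          (TensorProduct.map (LinearMap.mul' k H) LinearMap.id
            ∘ₗ (TensorProduct.tensorTensorTensorComm k H C H C).toLinearMap
            ∘ₗ TensorProduct.map ρ ρ) := by
    ext c d e
    simp only [TensorProduct.AlgebraTensorModule.curry_apply, TensorProduct.curry_apply,
      LinearMap.coe_restrictScalars, LinearMap.comp_apply, LinearEquiv.coe_coe,
      TensorProduct.map_tmul, TensorProduct.assoc_symm_tmul, LinearMap.id_apply, hD, hR']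
    generalize ρ d = x
    generalize ρ e = y
    induction x using TensorProduct.induction_on with
    | zero => simp
    | tmul h d0 =>
      induction y using TensorProduct.induction_on with
      | zero => simp
      | tmul h' e0 => simp [m2]
      | add s t hs ht => simp only [tmul_add, map_add, hs, ht]
    | add s t hs ht => simp only [add_tmul, tmul_add, map_add, hs, ht]
  apply LinearMap.ext; intro c
  have lhs1 : rmod k H C (deltaM k H C ρ u) (TensorProduct.map LinearMap.id uinv ∘ₗ ρ) c
      = actX k H C ((TensorProduct.map D (TensorProduct.map LinearMap.id uinv ∘ₗ ρ))
          ((TensorProduct.assoc k C C C).symm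
            (Coalgebra.comul.lTensor C (Coalgebra.comul c)))) := by
    simp only [rmod, deltaM, LinearMap.comp_apply, ← LinearMap.comp_assoc, ← hD]
    rw [map_comp_left_apply, ← coassoc_symm_apply]
  rw [lhs1]
  have := LinearMap.congr_fun GEN (Coalgebra.comul.lTensor C (Coalgebra.comul c))
  simp only [LinearMap.comp_apply, LinearEquiv.coe_coe] at this
  rw [this]
  -- now use (14)
  have merge1 : (TensorProduct.map LinearMap.id
        (TensorProduct.map (LinearMap.mul' k H) LinearMap.id
          ∘ₗ (TensorProduct.tensorTensorTensorComm k H C H C).toLinearMap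
          ∘ₗ TensorProduct.map ρ ρ))
        (Coalgebra.comul.lTensor C (Coalgebra.comul c))
      = TensorProduct.map LinearMap.id (TensorProduct.map LinearMap.id Coalgebra.comul ∘ₗ ρ)
          (Coalgebra.comul c) := by
    rw [show (Coalgebra.comul.lTensor C) (Coalgebra.comul c)
        = TensorProduct.map LinearMap.id Coalgebra.comul (Coalgebra.comul c) from rfl]
    rw [map_merge]
    simp only [LinearMap.comp_assoc, LinearMap.id_comp]
    rw [← h14]
  rw [merge1]
  -- split ρ and use key_cancel
  rw [show (TensorProduct.map (LinearMap.id : C →ₗ[k] C)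
        (TensorProduct.map LinearMap.id Coalgebra.comul ∘ₗ ρ)) (Coalgebra.comul c)
      = TensorProduct.map LinearMap.id (TensorProduct.map LinearMap.id Coalgebra.comul)
          (TensorProduct.map LinearMap.id ρ (Coalgebra.comul c)) by
    rw [map_merge]; simp]
  have FIN := LinearMap.congr_fun
    (show R' ∘ₗ TensorProduct.map LinearMap.id
          (TensorProduct.map (LinearMap.id : H →ₗ[k] H) Coalgebra.comul)
        = (TensorProduct.assoc k C H (C ⊗[k] H)).symm.toLinearMap
          ∘ₗ TensorProduct.map LinearMap.id
              (TensorProduct.map LinearMap.id (j1 k H C)) by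
      rw [hR']
      simp only [LinearMap.comp_assoc]
      congr 1
      rw [← TensorProduct.map_comp, ← TensorProduct.map_comp, LinearMap.id_comp,
        LinearMap.id_comp]
      rw [show (m2 k H C ∘ₗ TensorProduct.map (omega k H C u) uinv) ∘ₗ Coalgebra.comul
          = j1 k H C from (LinearMap.comp_assoc _ _ _).trans (key_cancel k H C u uinv hu₁)])
    (TensorProduct.map LinearMap.id ρ (Coalgebra.comul c))
  simp only [LinearMap.comp_apply] at FIN
  rw [FIN]
  simp only [gammaM, LinearMap.comp_apply, LinearEquiv.coe_coe]
  rw [map_merge]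
  simp

end Aux6


section Aux7

variable (k : Type) [Field k]
variable (H : Type) [Ring H] [HopfAlgebra k H]
variable (C : Type) [AddCommGroup C] [Module k C] [Coalgebra k C]

/-- `Λ₁ : e ⊗ (h ⊗ y) ↦ eh ⊗ y` on `H ⊗ (H ⊗ (C ⊗ H))`. -/
def Lam1 : H ⊗[k] (H ⊗[k] (C ⊗[k] H)) →ₗ[k] H ⊗[k] (C ⊗[k] H) :=
  TensorProduct.map (LinearMap.mul' k H) LinearMap.id
    ∘ₗ (TensorProduct.assoc k H H (C ⊗[k] H)).symm.toLinearMap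

lemma midL (u : C →ₗ[k] H) (τ : C →ₗ[k] H ⊗[k] C) :
    TensorProduct.map (phiMap k H C u) (phiMap k H C u) ∘ₗ gammaM k H C τ
      = (TensorProduct.assoc k C H (C ⊗[k] H)).symm.toLinearMap
        ∘ₗ TensorProduct.map LinearMap.id
            (Lam1 k H C ∘ₗ TensorProduct.map u
                (TensorProduct.map LinearMap.id (omega k H C u) ∘ₗ τ)
              ∘ₗ Coalgebra.comul)
        ∘ₗ Coalgebra.comul := by
  have G4 : TensorProduct.map (phiMap k H C u) (phiMap k H C u)
        ∘ₗ (TensorProduct.assoc k C H (C ⊗[k] H)).symm.toLinearMap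
        ∘ₗ TensorProduct.map LinearMap.id
            (TensorProduct.map LinearMap.id (j1 k H C) ∘ₗ τ)
      = (TensorProduct.map (m2 k H C) LinearMap.id
          ∘ₗ (TensorProduct.assoc k (C ⊗[k] H) H (C ⊗[k] H)).symm.toLinearMap)
        ∘ₗ TensorProduct.map (omega k H C u)
            (TensorProduct.map LinearMap.id (omega k H C u) ∘ₗ τ) := by
    ext c d
    simp only [TensorProduct.AlgebraTensorModule.curry_apply, TensorProduct.curry_apply,
      LinearMap.coe_restrictScalars, LinearMap.comp_apply, LinearEquiv.coe_coe,
      TensorProduct.map_tmul, LinearMap.id_apply]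
    generalize τ d = x
    induction x using TensorProduct.induction_on with
    | zero => simp
    | tmul h d0 => simp [m2_one]
    | add s t hs ht => simp only [tmul_add, map_add, hs, ht]
  have G5 : (TensorProduct.map (m2 k H C) LinearMap.id
          ∘ₗ (TensorProduct.assoc k (C ⊗[k] H) H (C ⊗[k] H)).symm.toLinearMap)
        ∘ₗ TensorProduct.map (TensorProduct.map LinearMap.id u)
            (TensorProduct.map LinearMap.id (omega k H C u) ∘ₗ τ)
        ∘ₗ (TensorProduct.assoc k C C C).symm.toLinearMap
      = (TensorProduct.assoc k C H (C ⊗[k] H)).symm.toLinearMap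
        ∘ₗ TensorProduct.map LinearMap.id
            (Lam1 k H C ∘ₗ TensorProduct.map u
              (TensorProduct.map LinearMap.id (omega k H C u) ∘ₗ τ)) := by
    ext c d e
    simp only [TensorProduct.AlgebraTensorModule.curry_apply, TensorProduct.curry_apply,
      LinearMap.coe_restrictScalars, LinearMap.comp_apply, LinearEquiv.coe_coe,
      TensorProduct.map_tmul, TensorProduct.assoc_symm_tmul, LinearMap.id_apply]
    generalize τ e = x
    induction x using TensorProduct.induction_on with
    | zero => simp [Lam1]
    | tmul h e0 => simp [Lam1, m2]
    | add s t hs ht => simp only [tmul_add, map_add, hs, ht]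
  apply LinearMap.ext; intro c
  simp only [LinearMap.comp_apply, LinearEquiv.coe_coe]
  have lhs1 : (TensorProduct.map (phiMap k H C u) (phiMap k H C u)) (gammaM k H C τ c)
      = ((TensorProduct.map (m2 k H C) LinearMap.id
          ∘ₗ (TensorProduct.assoc k (C ⊗[k] H) H (C ⊗[k] H)).symm.toLinearMap)
        ∘ₗ TensorProduct.map (omega k H C u)
            (TensorProduct.map LinearMap.id (omega k H C u) ∘ₗ τ)) (Coalgebra.comul c) := by
    have := LinearMap.congr_fun G4 (Coalgebra.comul c)
    simp only [LinearMap.comp_apply] at this ⊢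
    simp only [gammaM, LinearMap.comp_apply, LinearEquiv.coe_coe]
    exact this
  simp only [LinearMap.comp_apply] at lhs1
  rw [lhs1]
  rw [show (TensorProduct.map (omega k H C u)
        (TensorProduct.map LinearMap.id (omega k H C u) ∘ₗ τ)) (Coalgebra.comul c)
      = (TensorProduct.map (TensorProduct.map LinearMap.id u)
          (TensorProduct.map LinearMap.id (omega k H C u) ∘ₗ τ))
          (Coalgebra.comul.rTensor C (Coalgebra.comul c)) from
    map_comp_left_apply k _ _ _ _]
  rw [← coassoc_symm_apply]
  have := LinearMap.congr_fun G5
    ((Coalgebra.comul.lTensor C) (Coalgebra.comul c))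
  simp only [LinearMap.comp_apply, LinearEquiv.coe_coe] at this
  refine this.trans ?_
  congr 1
  rw [show (Coalgebra.comul.lTensor C) (Coalgebra.comul c)
      = TensorProduct.map LinearMap.id Coalgebra.comul (Coalgebra.comul c) from rfl]
  rw [map_merge]
  simp only [LinearMap.id_comp, LinearMap.comp_assoc]

lemma midR (ρ : C →ₗ[k] H ⊗[k] C) (u : C →ₗ[k] H) :
    rmod k H C (deltaM k H C ρ u) (((TensorProduct.mk k H H).flip 1) ∘ₗ u)
      = (TensorProduct.assoc k C H (C ⊗[k] H)).symm.toLinearMap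
        ∘ₗ TensorProduct.map LinearMap.id
            (TensorProduct.map LinearMap.id (omega k H C u) ∘ₗ rAct k H C
              ∘ₗ TensorProduct.map ρ u ∘ₗ Coalgebra.comul)
        ∘ₗ Coalgebra.comul := by
  set D : C ⊗[k] C →ₗ[k] (C ⊗[k] H) ⊗[k] (C ⊗[k] H) :=
    (TensorProduct.assoc k C H (C ⊗[k] H)).symm.toLinearMap
      ∘ₗ TensorProduct.map LinearMap.id
          (TensorProduct.map LinearMap.id (omega k H C u) ∘ₗ ρ) with hD
  have G3 : actX k H C ∘ₗ TensorProduct.map D (((TensorProduct.mk k H H).flip 1) ∘ₗ u)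
        ∘ₗ (TensorProduct.assoc k C C C).symm.toLinearMap
      = (TensorProduct.assoc k C H (C ⊗[k] H)).symm.toLinearMap
        ∘ₗ TensorProduct.map LinearMap.id
            (TensorProduct.map LinearMap.id (omega k H C u) ∘ₗ rAct k H C
              ∘ₗ TensorProduct.map ρ u) := by
    ext c d e
    simp only [TensorProduct.AlgebraTensorModule.curry_apply, TensorProduct.curry_apply,
      LinearMap.coe_restrictScalars, LinearMap.comp_apply, LinearEquiv.coe_coe,
      TensorProduct.map_tmul, TensorProduct.assoc_symm_tmul, LinearMap.id_apply, hD]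
    generalize ρ d = x
    induction x using TensorProduct.induction_on with
    | zero => simp [rAct]
    | tmul h d0 => simp [rAct, m2_one]
    | add s t hs ht => simp only [tmul_add, add_tmul, map_add, hs, ht]
  apply LinearMap.ext; intro c
  have lhs1 : rmod k H C (deltaM k H C ρ u) (((TensorProduct.mk k H H).flip 1) ∘ₗ u) c
      = actX k H C ((TensorProduct.map D (((TensorProduct.mk k H H).flip 1) ∘ₗ u))
          ((TensorProduct.assoc k C C C).symm
            (Coalgebra.comul.lTensor C (Coalgebra.comul c)))) := by
    simp only [rmod, deltaM, LinearMap.comp_apply, ← LinearMap.comp_assoc, ← hD]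
    rw [map_comp_left_apply, ← coassoc_symm_apply]
  rw [lhs1]
  have := LinearMap.congr_fun G3 ((Coalgebra.comul.lTensor C) (Coalgebra.comul c))
  simp only [LinearMap.comp_apply, LinearEquiv.coe_coe] at this
  rw [this]
  simp only [LinearMap.comp_apply, LinearEquiv.coe_coe]
  congr 1
  rw [show (Coalgebra.comul.lTensor C) (Coalgebra.comul c)
      = TensorProduct.map LinearMap.id Coalgebra.comul (Coalgebra.comul c) from rfl]
  rw [map_merge]
  simp only [LinearMap.id_comp, LinearMap.comp_assoc]

end Aux7


section Aux8

variable (k : Type) [Field k]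
variable (H : Type) [Ring H] [HopfAlgebra k H]
variable (C : Type) [AddCommGroup C] [Module k C] [Coalgebra k C]

lemma claim18 (ρ : C →ₗ[k] H ⊗[k] C) (u uinv : C →ₗ[k] H)
    (hu₁ : convH k H C u uinv = unitH k H C) :
    Lam1 k H C ∘ₗ TensorProduct.map u
        (TensorProduct.map LinearMap.id (omega k H C u) ∘ₗ rhs18 k H C ρ u uinv)
      ∘ₗ Coalgebra.comul
    = TensorProduct.map LinearMap.id (omega k H C u) ∘ₗ rAct k H C
        ∘ₗ TensorProduct.map ρ u ∘ₗ Coalgebra.comul := by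
  set B : C ⊗[k] (C ⊗[k] C) →ₗ[k] H ⊗[k] C :=
    TensorProduct.map (LinearMap.mul' k H) LinearMap.id
      ∘ₗ (TensorProduct.assoc k H H C).symm.toLinearMap
      ∘ₗ TensorProduct.map LinearMap.id (rAct k H C)
      ∘ₗ TensorProduct.map uinv (TensorProduct.map ρ u) with hB
  have hrhs : rhs18 k H C ρ u uinv = B ∘ₗ comul₂ k C := by
    rw [hB, rhs18]
    simp only [LinearMap.comp_assoc]
  have G1 : Lam1 k H C ∘ₗ TensorProduct.map u
        (TensorProduct.map LinearMap.id (omega k H C u) ∘ₗ B)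
        ∘ₗ (TensorProduct.assoc k C C (C ⊗[k] C)).toLinearMap
      = (Lam1 k H C ∘ₗ TensorProduct.map LinearMap.id
            (TensorProduct.map LinearMap.id (omega k H C u) ∘ₗ rAct k H C))
        ∘ₗ TensorProduct.map (LinearMap.mul' k H ∘ₗ TensorProduct.map u uinv)
            (TensorProduct.map ρ u) := by
    ext a b cc d
    simp only [TensorProduct.AlgebraTensorModule.curry_apply, TensorProduct.curry_apply,
      LinearMap.coe_restrictScalars, LinearMap.comp_apply, LinearEquiv.coe_coe,
      TensorProduct.map_tmul, TensorProduct.assoc_tmul, LinearMap.id_apply, hB]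
    generalize ρ cc = x
    induction x using TensorProduct.induction_on with
    | zero =>
      simp only [TensorProduct.zero_tmul, TensorProduct.tmul_zero, map_zero]
    | tmul h c0 => simp [Lam1, rAct, mul_assoc]
    | add s t hs ht => simp only [tmul_add, add_tmul, map_add, hs, ht]
  have G2 : (Lam1 k H C ∘ₗ TensorProduct.map LinearMap.id
          (TensorProduct.map LinearMap.id (omega k H C u) ∘ₗ rAct k H C))
        ∘ₗ TensorProduct.mk k H ((H ⊗[k] C) ⊗[k] H) 1
      = TensorProduct.map LinearMap.id (omega k H C u) ∘ₗ rAct k H C := by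
    ext h c0 g
    simp [Lam1, rAct]
  apply LinearMap.ext; intro x
  simp only [LinearMap.comp_apply]
  rw [hrhs]
  rw [show TensorProduct.map LinearMap.id (omega k H C u) ∘ₗ B ∘ₗ comul₂ k C
      = (TensorProduct.map LinearMap.id (omega k H C u) ∘ₗ B) ∘ₗ comul₂ k C from
    (LinearMap.comp_assoc _ _ _).symm]
  rw [map_comp_right_apply]
  rw [show (comul₂ k C).lTensor C (Coalgebra.comul x)
      = TensorProduct.map LinearMap.id (comul₂ k C) (Coalgebra.comul x) from rfl]
  rw [J7]
  have g1 := LinearMap.congr_fun G1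
    (TensorProduct.map Coalgebra.comul Coalgebra.comul (Coalgebra.comul x))
  simp only [LinearMap.comp_apply, LinearEquiv.coe_coe] at g1
  rw [g1]
  rw [show (TensorProduct.map (LinearMap.mul' k H ∘ₗ TensorProduct.map u uinv)
        (TensorProduct.map ρ u))
        ((TensorProduct.map Coalgebra.comul Coalgebra.comul) (Coalgebra.comul x))
      = (TensorProduct.map ((LinearMap.mul' k H ∘ₗ TensorProduct.map u uinv)
            ∘ₗ Coalgebra.comul)
          (TensorProduct.map ρ u ∘ₗ Coalgebra.comul)) (Coalgebra.comul x) by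
    rw [← LinearMap.comp_apply, ← TensorProduct.map_comp]]
  rw [show (LinearMap.mul' k H ∘ₗ TensorProduct.map u uinv) ∘ₗ Coalgebra.comul
      = convH k H C u uinv from by rw [convH, LinearMap.comp_assoc]]
  rw [hu₁, unitH, ← LinearMap.map_comp_rTensor, LinearMap.comp_apply, rTensor_counit_comul]
  rw [show (TensorProduct.map (Algebra.linearMap k H)
        (TensorProduct.map ρ u ∘ₗ Coalgebra.comul)) ((1 : k) ⊗ₜ x)
      = (1 : H) ⊗ₜ ((TensorProduct.map ρ u) (Coalgebra.comul x)) by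
    simp]
  have g2 := LinearMap.congr_fun G2 ((TensorProduct.map ρ u) (Coalgebra.comul x))
  simp only [LinearMap.comp_apply, TensorProduct.mk_apply] at g2
  exact g2

lemma mid (ρ : C →ₗ[k] H ⊗[k] C) (u uinv : C →ₗ[k] H)
    (hu₁ : convH k H C u uinv = unitH k H C) :
    TensorProduct.map (phiMap k H C u) (phiMap k H C u)
        ∘ₗ gammaM k H C (rhs18 k H C ρ u uinv)
      = rmod k H C (deltaM k H C ρ u) (((TensorProduct.mk k H H).flip 1) ∘ₗ u) := by
  rw [midL, claim18 k H C ρ u uinv hu₁, midR]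

lemma DeltaAl_eq (ρ : C →ₗ[k] H ⊗[k] C) (α : C →ₗ[k] H ⊗[k] H) :
    DeltaAl k H C ρ α = actX k H C
      ∘ₗ TensorProduct.map (psiMap k H C ρ α) Coalgebra.comul := by
  rw [DeltaAl, actX, LinearMap.comp_assoc]

/-- the key identity (★★). -/
lemma star2 (ρ : C →ₗ[k] H ⊗[k] C) (α : C →ₗ[k] H ⊗[k] H) (u uinv : C →ₗ[k] H)
    (hu₁ : convH k H C u uinv = unitH k H C)
    (h14 : TensorProduct.map LinearMap.id Coalgebra.comul ∘ₗ ρ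
      = TensorProduct.map (LinearMap.mul' k H) LinearMap.id
          ∘ₗ (TensorProduct.tensorTensorTensorComm k H C H C).toLinearMap
          ∘ₗ TensorProduct.map ρ ρ ∘ₗ Coalgebra.comul) :
    DeltaAl k H C ρ α ∘ₗ omega k H C u
      = TensorProduct.map (phiMap k H C u) (phiMap k H C u)
          ∘ₗ psiMap k H C (rhs18 k H C ρ u uinv) (rhs19 k H C ρ α u uinv) := by
  have lhs : DeltaAl k H C ρ α ∘ₗ omega k H C u
      = rmod k H C (gammaM k H C ρ) (conv2 k H C α (Coalgebra.comul ∘ₗ u)) := by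
    rw [DeltaAl_eq, omega, LinearMap.comp_assoc]
    rw [show TensorProduct.map (psiMap k H C ρ α) Coalgebra.comul
          ∘ₗ (TensorProduct.map LinearMap.id u ∘ₗ Coalgebra.comul)
        = TensorProduct.map (psiMap k H C ρ α) (Coalgebra.comul ∘ₗ u)
            ∘ₗ Coalgebra.comul by
      rw [← LinearMap.comp_assoc, ← TensorProduct.map_comp, LinearMap.comp_id]]
    rw [show actX k H C ∘ₗ TensorProduct.map (psiMap k H C ρ α) (Coalgebra.comul ∘ₗ u)
          ∘ₗ Coalgebra.comul
        = rmod k H C (psiMap k H C ρ α) (Coalgebra.comul ∘ₗ u) from rfl]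
    rw [psiMap_eq_rmod, rmod_rmod]
  rw [lhs, psiMap_eq_rmod, phiphi_rmod, rhs19_eq, mid k H C ρ u uinv hu₁]
  conv_rhs => rw [← rmod_rmod, rmod_rmod k H C (deltaM k H C ρ u)]
  rw [jflip_convH, hu₁, jflip_unitH, rmod_one]
  conv_rhs => rw [← rmod_rmod]
  rw [crux k H C ρ u uinv hu₁ h14]

end Aux8


section Aux9

variable (k : Type) [Field k]
variable (H : Type) [Ring H] [HopfAlgebra k H]
variable (C : Type) [AddCommGroup C] [Module k C] [Coalgebra k C]

lemma counit_u (ρ : C →ₗ[k] H ⊗[k] C) (α α' : C →ₗ[k] H ⊗[k] H) (u uinv : C →ₗ[k] H)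
    (hu₁ : convH k H C u uinv = unitH k H C)
    (hu₂ : convH k H C uinv u = unitH k H C)
    (h19 : α' = rhs19 k H C ρ α u uinv)
    (h16 : (TensorProduct.lid k C).toLinearMap
        ∘ₗ TensorProduct.map Coalgebra.counit LinearMap.id ∘ₗ ρ = LinearMap.id)
    (hαI : (TensorProduct.lid k H).toLinearMap
        ∘ₗ TensorProduct.map Coalgebra.counit LinearMap.id ∘ₗ α
      = Algebra.linearMap k H ∘ₗ Coalgebra.counit)
    (hα'I : (TensorProduct.lid k H).toLinearMap
        ∘ₗ TensorProduct.map Coalgebra.counit LinearMap.id ∘ₗ α'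
      = Algebra.linearMap k H ∘ₗ Coalgebra.counit) :
    Coalgebra.counit ∘ₗ uinv = (Coalgebra.counit : C →ₗ[k] k)
      ∧ Coalgebra.counit ∘ₗ u = (Coalgebra.counit : C →ₗ[k] k) := by
  have hconv2 : convK k C (Coalgebra.counit ∘ₗ uinv) (Coalgebra.counit ∘ₗ u)
      = Coalgebra.counit := by
    rw [← counit_comp_convH, hu₂, counit_comp_unitH]
  have hα'c : E2 k H ∘ₗ α' = Coalgebra.counit := E2_comp_cocycle k H C α' hα'I
  have h19E : E2 k H ∘ₗ α'
      = convK k C (Coalgebra.counit ∘ₗ uinv)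
          (convK k C (Coalgebra.counit ∘ₗ uinv)
            (convK k C Coalgebra.counit (Coalgebra.counit ∘ₗ u))) := by
    rw [h19, rhs19_eq, E2_comp_conv2, E2_comp_conv2, E2_comp_conv2]
    rw [show E2 k H ∘ₗ ((TensorProduct.mk k H H).flip 1 ∘ₗ uinv)
        = Coalgebra.counit ∘ₗ uinv from by
      rw [← LinearMap.comp_assoc, E2_comp_jflip]]
    rw [E2_comp_rho k H C ρ uinv h16]
    rw [E2_comp_cocycle k H C α hαI]
    rw [show E2 k H ∘ₗ (Coalgebra.comul ∘ₗ u) = Coalgebra.counit ∘ₗ u from by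
      rw [← LinearMap.comp_assoc, E2_comp_comul]]
  have he' : Coalgebra.counit ∘ₗ uinv = (Coalgebra.counit : C →ₗ[k] k) := by
    have h := h19E.symm.trans hα'c
    rw [convK_counit_left, hconv2, convK_counit_right] at h
    exact h
  refine ⟨he', ?_⟩
  have h2 := hconv2
  rw [he', convK_counit_left] at h2
  exact h2

lemma epsAl_m2 : epsAl k H C ∘ₗ m2 k H C
    = LinearMap.mul' k k ∘ₗ TensorProduct.map (epsAl k H C) Coalgebra.counit := by
  ext c g h
  simp [epsAl, m2, mul_assoc]

lemma epsAl_omega (u : C →ₗ[k] H) (hcu : Coalgebra.counit ∘ₗ u = Coalgebra.counit) :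
    epsAl k H C ∘ₗ omega k H C u = (Coalgebra.counit : C →ₗ[k] k) := by
  have GENb : epsAl k H C ∘ₗ TensorProduct.map LinearMap.id u
      = (TensorProduct.lid k k).toLinearMap
          ∘ₗ TensorProduct.map Coalgebra.counit (Coalgebra.counit ∘ₗ u) := by
    ext a b
    simp [epsAl]
  apply LinearMap.ext; intro c
  rw [show (epsAl k H C ∘ₗ omega k H C u) c
      = (epsAl k H C ∘ₗ TensorProduct.map LinearMap.id u) (Coalgebra.comul c) from rfl]
  rw [GENb, hcu]
  have hsplit : (TensorProduct.map (Coalgebra.counit : C →ₗ[k] k) Coalgebra.counit)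
      = ((Coalgebra.counit : C →ₗ[k] k).lTensor k) ∘ₗ (Coalgebra.counit.rTensor C) := by
    ext a b; simp
  rw [LinearMap.comp_apply, hsplit, LinearMap.comp_apply, rTensor_counit_comul]
  simp

lemma epsAl_phi (u : C →ₗ[k] H) (hcu : Coalgebra.counit ∘ₗ u = Coalgebra.counit) :
    epsAl k H C ∘ₗ phiMap k H C u = epsAl k H C := by
  rw [phiMap_eq, ← LinearMap.comp_assoc, epsAl_m2, LinearMap.comp_assoc]
  rw [show TensorProduct.map (epsAl k H C) (Coalgebra.counit : H →ₗ[k] k)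
        ∘ₗ TensorProduct.map (omega k H C u) LinearMap.id
      = TensorProduct.map (epsAl k H C ∘ₗ omega k H C u) Coalgebra.counit from by
    rw [← TensorProduct.map_comp, LinearMap.comp_id]]
  rw [epsAl_omega k H C u hcu]
  ext c h
  simp [epsAl]

lemma part4 (ρ : C →ₗ[k] H ⊗[k] C) (α : C →ₗ[k] H ⊗[k] H) (u uinv : C →ₗ[k] H)
    (hu₁ : convH k H C u uinv = unitH k H C)
    (h14 : TensorProduct.map LinearMap.id Coalgebra.comul ∘ₗ ρ
      = TensorProduct.map (LinearMap.mul' k H) LinearMap.id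
          ∘ₗ (TensorProduct.tensorTensorTensorComm k H C H C).toLinearMap
          ∘ₗ TensorProduct.map ρ ρ ∘ₗ Coalgebra.comul) :
    DeltaAl k H C ρ α ∘ₗ phiMap k H C u
      = TensorProduct.map (phiMap k H C u) (phiMap k H C u)
          ∘ₗ DeltaAl k H C (rhs18 k H C ρ u uinv) (rhs19 k H C ρ α u uinv) := by
  conv_lhs => rw [phiMap_eq, ← LinearMap.comp_assoc, DeltaAl_m2, LinearMap.comp_assoc]
  rw [show TensorProduct.map (DeltaAl k H C ρ α) (Coalgebra.comul : H →ₗ[k] H ⊗[k] H)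
        ∘ₗ TensorProduct.map (omega k H C u) LinearMap.id
      = TensorProduct.map (DeltaAl k H C ρ α ∘ₗ omega k H C u) Coalgebra.comul from by
    rw [← TensorProduct.map_comp, LinearMap.comp_id]]
  rw [star2 k H C ρ α u uinv hu₁ h14]
  rw [show TensorProduct.map (TensorProduct.map (phiMap k H C u) (phiMap k H C u)
          ∘ₗ psiMap k H C (rhs18 k H C ρ u uinv) (rhs19 k H C ρ α u uinv))
          (Coalgebra.comul : H →ₗ[k] H ⊗[k] H)
      = (TensorProduct.map (phiMap k H C u) (phiMap k H C u)).rTensor (H ⊗[k] H)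
          ∘ₗ TensorProduct.map
              (psiMap k H C (rhs18 k H C ρ u uinv) (rhs19 k H C ρ α u uinv))
              Coalgebra.comul from by
    rw [LinearMap.rTensor, ← TensorProduct.map_comp, LinearMap.id_comp]]
  rw [← LinearMap.comp_assoc, ← phiphi_act, LinearMap.comp_assoc, ← DeltaAl_eq]

end Aux9

end TwistPaper

/-- Lemma 1.4: if `u : C → H` is convolution invertible with
`ρ'(c) = u⁻¹(c₁)c₂₍₋₁₎u(c₃) ⊗ c₂₍₀₎` and
`α'(c) = u⁻¹(c₁)c₂₍₋₁₎α₁(c₃)u(c₄)₁ ⊗ u⁻¹(c₂₍₀₎)α₂(c₃)u(c₄)₂`, then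
`φ(c ⊗ h) = c₁ ⊗ u(c₂)h` is a left `C`-colinear, right `H`-linear coalgebra
isomorphism from `C ⋊'_{α'} H` to `C ⋊_α H`. -/
theorem TwistPaper.crossedCoproduct_iso
    (ρ ρ' : C →ₗ[k] H ⊗[k] C)
    (hρ : IsWeakCoaction k H C ρ) (hρ' : IsWeakCoaction k H C ρ')
    (α α' : C →ₗ[k] H ⊗[k] H)
    (hα : IsHarrison k H C ρ α) (hα' : IsHarrison k H C ρ' α')
    (u uinv : C →ₗ[k] H)
    (hu₁ : convH k H C u uinv = unitH k H C)
    (hu₂ : convH k H C uinv u = unitH k H C)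
    (h18 : ρ' = rhs18 k H C ρ u uinv)
    (h19 : α' = rhs19 k H C ρ α u uinv) :
    -- φ is bijective
    Function.Bijective (phiMap k H C u) ∧
    -- φ is left C-colinear
    TensorProduct.map LinearMap.id (phiMap k H C u) ∘ₗ coactC k H C
      = coactC k H C ∘ₗ phiMap k H C u ∧
    -- φ is right H-linear
    phiMap k H C u ∘ₗ m2 k H C = m2 k H C ∘ₗ TensorProduct.map (phiMap k H C u) LinearMap.id ∧
    -- φ is a coalgebra map
    DeltaAl k H C ρ α ∘ₗ phiMap k H C u
      = TensorProduct.map (phiMap k H C u) (phiMap k H C u) ∘ₗ DeltaAl k H C ρ' α' ∧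
    epsAl k H C ∘ₗ phiMap k H C u = epsAl k H C := by
  obtain ⟨h14, h15, h16⟩ := hρ
  obtain ⟨⟨hαI, hαII⟩, -, -⟩ := hα
  obtain ⟨⟨hα'I, hα'II⟩, -, -⟩ := hα'
  obtain ⟨hcuinv, hcu⟩ := counit_u k H C ρ α α' u uinv hu₁ hu₂ h19 h16 hαI hα'I
  have inv1 : phiMap k H C u ∘ₗ phiMap k H C uinv = LinearMap.id := by
    rw [phi_phi, hu₁, omega_unitH, m2_j1_id]
  have inv2 : phiMap k H C uinv ∘ₗ phiMap k H C u = LinearMap.id := by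
    rw [phi_phi, hu₂, omega_unitH, m2_j1_id]
  refine ⟨?_, phi_colinear k H C u, phi_hlinear k H C u, ?_, epsAl_phi k H C u hcu⟩
  · refine Function.bijective_iff_has_inverse.mpr
      ⟨phiMap k H C uinv, fun x => ?_, fun x => ?_⟩
    · simpa using LinearMap.congr_fun inv2 x
    · simpa using LinearMap.congr_fun inv1 x
  · rw [h18, h19]
    exact part4 k H C ρ α u uinv hu₁ h14
end
end
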